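/- arXiv:1706.04858 — 4 statements merged into one kernel-verified Lean document; each statement's English description precedes it below -/
import Mathlib

section
/- Let M be a special local Moufang set, n ∈ ℕ, and x a unit such that x·k is a unit for all 1 ≤ k ≤ n. Then there is a unique y with y·n = x; moreover (x·n)τ = (xτ)·(1/n) and (x·(1/n))τ = (xτ)·n for any μ-map τ. -/
/-!
Local Moufang sets, following E. Rijcken, "Local Moufang sets".
A local Moufang set is a set `X` with an equivalence relation (a `Setoid`)
having more than 2 classes, together with root groups `U x` of
equivalence-preserving permutations, satisfying (LM0), (LM1), (LM1'), (LM2).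
We use left actions; the paper's right-composition word `a₁a₂⋯aₙ` corresponds
to our product `aₙ * ⋯ * a₁`, and the paper's conjugation `g^h = h⁻¹gh`
corresponds to `h * g * h⁻¹` (i.e. `MulAut.conj h g`).
-/

variable {X : Type*}

/-- A permutation of `X` preserves the equivalence relation `r`. -/
def PreservesRel (r : Setoid X) (g : Equiv.Perm X) : Prop :=
  ∀ a b : X, r.r a b ↔ r.r (g a) (g b)

/-- A local pre-Moufang set: axioms (LM0), (LM1), (LM1'). -/
structure IsLocalPreMoufangSet (r : Setoid X) (U : X → Subgroup (Equiv.Perm X)) : Prop where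
  /-- `X` has more than two equivalence classes. -/
  big : ∃ a b c : X, ¬ r.r a b ∧ ¬ r.r a c ∧ ¬ r.r b c
  /-- root groups consist of equivalence-preserving permutations -/
  preserves : ∀ x : X, ∀ g ∈ U x, PreservesRel r g
  /-- (LM0): if `x ∼ y` then the induced actions of `U x` and `U y` on the quotient agree -/
  lm0 : ∀ x y : X, r.r x y → ∀ g ∈ U x, ∃ h ∈ U y, ∀ a : X, r.r (g a) (h a)
  /-- (LM1): `U x` fixes `x` ... -/
  fixes : ∀ x : X, ∀ g ∈ U x, g x = x
  /-- (LM1): ... and acts sharply transitively on the complement of the class of `x` -/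
  lm1 : ∀ x a b : X, ¬ r.r a x → ¬ r.r b x → ∃! g : Equiv.Perm X, g ∈ U x ∧ g a = b
  /-- (LM1'): the induced action on the quotient is transitive away from the class of `x` ... -/
  lm1'_trans : ∀ x a b : X, ¬ r.r a x → ¬ r.r b x → ∃ g ∈ U x, r.r (g a) b
  /-- (LM1'): ... and sharply so -/
  lm1'_sharp : ∀ x : X, ∀ g ∈ U x, ∀ h ∈ U x, ∀ a : X, ¬ r.r a x →
    r.r (g a) (h a) → ∀ b : X, r.r (g b) (h b)

/-- A local Moufang set: a local pre-Moufang set satisfying (LM2). -/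
structure IsLocalMoufangSet (r : Setoid X) (U : X → Subgroup (Equiv.Perm X))
    extends IsLocalPreMoufangSet r U : Prop where
  /-- (LM2): `U x ^ g = U (x g)` for all `g` in the little projective group `⟨U y : y⟩` -/
  lm2 : ∀ x : X, ∀ g ∈ (⨆ y : X, U y), (U x).map (MulAut.conj g).toMonoidHom = U (g x)

/-- `μ` is the μ-map of the point `x` w.r.t. the basis `(o, i) = (0, ∞)`:
it lies in the double coset `U 0 · α_x · U 0` (where `α_x` is the unique element
of `U ∞` with `0 · α_x = x`) and interchanges `0` and `∞`. -/
def IsMuMap (U : X → Subgroup (Equiv.Perm X)) (o i x : X) (μ : Equiv.Perm X) : Prop :=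
  ∃ a : Equiv.Perm X, a ∈ U i ∧ a o = x ∧
    (∃ u ∈ U o, ∃ v ∈ U o, μ = u * a * v) ∧ μ o = i ∧ μ i = o

/-- The Hua subgroup `H = ⟨μ_x μ_y : x, y units⟩` w.r.t. the basis `(o, i) = (0, ∞)`. -/
def HuaSubgroup (r : Setoid X) (U : X → Subgroup (Equiv.Perm X)) (o i : X) :
    Subgroup (Equiv.Perm X) :=
  Subgroup.closure {g | ∃ x y μx μy, (¬ r.r x o ∧ ¬ r.r x i) ∧ (¬ r.r y o ∧ ¬ r.r y i) ∧
    IsMuMap U o i x μx ∧ IsMuMap U o i y μy ∧ g = μx * μy}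


/-!
Write `α y ∈ U i` and `γ y ∈ U o` for the root elements with `o ↦ y`, resp. `i ↦ y`, and
`y · s = α_y^s o`, `y / s = γ_y^s i`. Speciality (`γ_y⁻¹ i = α_y⁻¹ o`) makes the μ-map
`μ_y = γ_y⁻¹ α_y γ_y⁻¹` conjugate `α_y ↦ γ_y⁻¹` and `γ_y ↦ α_y⁻¹`, so it exchanges `y · s`
with `y / (-s)` and `y · s ∼ o` with `y / s ∼ i`.

The root of `x` is `x / n`, and `α_{y/n}^n = α_y` is proved by strong induction on `n`. With
`w = y / (n-1)` the point `R = α_y w` has `α_R = α_w^n`. The exponents `s` with `y · s ∼ o` are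
the multiples of some `q` having no divisor in `[2, n)` (by induction), which makes `R · j` a
unit for `j < n`; the induction hypothesis at `R` then gives `γ_{y·n}^{n-1} = γ_R`, and
conjugating by `μ_y` and `μ_{y·n}` turns this into `α_{y/n}^n = α_y`. For any root `y` of `x`
the multiples of `y` are units too, and conjugating its identity by `μ_y` gives `γ_x^n = γ_y`,
i.e. `y = x / n`. The formulas for `τ` come from `τ α_y τ⁻¹ = γ_{τ y}`.
-/
open Equiv

theorem Nat.not_dvd_mul_of_no_small_divisor {q m j : ℕ} (hj : 1 ≤ j) (hjm : j ≤ m)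
    (hq : ∀ d, 2 ≤ d → d ≤ m → d ∣ q → q = 0) (hqm : ¬ q ∣ m + 1) :
    ¬ q ∣ m * ((m + 1) * j) := by
  intro h
  obtain rfl | hq0 := eq_or_ne q 0
  · simp at h; omega
  have hcop : ∀ k, 1 ≤ k → k ≤ m → q.Coprime k := by
    intro k hk hkm
    by_contra hg
    have hpos : 0 < q.gcd k := Nat.gcd_pos_of_pos_right q hk
    exact hq0 (hq _ (by omega) ((Nat.gcd_le_right _ hk).trans hkm) (Nat.gcd_dvd_left q k))
  have hqmj : q ∣ (m + 1) * j := (hcop m (by omega) le_rfl).dvd_of_dvd_mul_left h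
  exact hqm ((hcop j hj hjm).dvd_of_dvd_mul_right hqmj)

section RootGroups

variable {r : Setoid X} {U : X → Subgroup (Perm X)}

theorem PreservesRel.rel_inv_apply_iff {g : Perm X} (hg : PreservesRel r g) (a : X) :
    r.r (g⁻¹ a) a ↔ r.r (g a) a := by
  rw [hg, Perm.coe_inv, apply_symm_apply]
  exact ⟨r.symm', r.symm'⟩

theorem PreservesRel.rel_pow_apply {g : Perm X} (hg : PreservesRel r g) {a : X}
    (h : r.r (g a) a) (k : ℕ) : r.r ((g ^ k) a) a := by
  induction k with
  | zero => exact r.refl' a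
  | succ k ih => rw [pow_succ', Perm.mul_apply]; exact r.trans' ((hg _ _).1 ih) h

def relPreservingSubgroup (r : Setoid X) : Subgroup (Perm X) where
  carrier := {g | PreservesRel r g}
  one_mem' _ _ := Iff.rfl
  mul_mem' hg hh a b := (hh a b).trans (hg _ _)
  inv_mem' {g} hg a b := by
    simpa only [Perm.coe_inv, apply_symm_apply] using (hg (g⁻¹ a) (g⁻¹ b)).symm

namespace IsLocalMoufangSet

variable (hM : IsLocalMoufangSet r U)
include hM

theorem preservesRel_of_mem_iSup {g : Perm X} (hg : g ∈ ⨆ y, U y) : PreservesRel r g :=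
  (iSup_le fun y u hu => hM.preserves y u hu : (⨆ y, U y) ≤ relPreservingSubgroup r) hg

theorem not_rel_apply_of_mem {c : X} {g : Perm X} (hg : g ∈ U c) {a : X} (ha : ¬ r.r a c) :
    ¬ r.r (g a) c := by
  simpa only [hM.fixes c g hg] using mt (hM.preserves c g hg a c).2 ha

theorem eq_of_mem_of_apply_eq {c : X} {g h : Perm X} (hg : g ∈ U c) (hh : h ∈ U c) {a : X}
    (ha : ¬ r.r a c) (he : g a = h a) : g = h :=
  (hM.lm1 c a (g a) ha (hM.not_rel_apply_of_mem hg ha)).unique ⟨hg, rfl⟩ ⟨hh, he.symm⟩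

end IsLocalMoufangSet

def IsRootParam (r : Setoid X) (U : X → Subgroup (Perm X)) (c b : X) (β : X → Perm X) : Prop :=
  ∀ y, ¬ r.r y c → β y ∈ U c ∧ β y b = y

theorem IsLocalMoufangSet.exists_isRootParam (hM : IsLocalMoufangSet r U) {b c : X}
    (hbc : ¬ r.r b c) : ∃ β, IsRootParam r U c b β := by
  classical
  choose β hβ using fun y (hy : ¬ r.r y c) => (hM.lm1 c b y hbc hy).exists
  exact ⟨fun y => if hy : r.r y c then 1 else β y hy, fun y hy => by simpa [hy] using hβ y hy⟩

namespace IsRootParam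

variable {c b : X} {β : X → Perm X} (hβ : IsRootParam r U c b β)
  (hM : IsLocalMoufangSet r U) (hbc : ¬ r.r b c)
include hβ hM hbc

theorem eq_apply {u : Perm X} (hu : u ∈ U c) : u = β (u b) :=
  have hub := hM.not_rel_apply_of_mem hu hbc
  hM.eq_of_mem_of_apply_eq hu (hβ _ hub).1 hbc (hβ _ hub).2.symm

theorem apply_zpow {y : X} (hy : ¬ r.r y c) (s : ℤ) : β ((β y ^ s) b) = β y ^ s :=
  (hβ.eq_apply hM hbc (zpow_mem (hβ y hy).1 s)).symm

theorem zpow_apply_zpow {y : X} (hy : ¬ r.r y c) (p s : ℤ) :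
    (β ((β y ^ p) b) ^ s) b = (β y ^ (p * s)) b := by
  rw [hβ.apply_zpow hM hbc hy, zpow_mul]

omit hbc in
theorem rel_zpow_neg_iff {y : X} (hy : ¬ r.r y c) (s : ℤ) :
    r.r ((β y ^ (-s)) b) b ↔ r.r ((β y ^ s) b) b := by
  rw [zpow_neg]
  exact PreservesRel.rel_inv_apply_iff (hM.preserves c _ (zpow_mem (hβ y hy).1 s)) b

omit hbc in
theorem exists_period {y : X} (hy : ¬ r.r y c) :
    ∃ q : ℕ, ∀ s : ℤ, r.r ((β y ^ s) b) b ↔ (q : ℤ) ∣ s := by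
  let H : AddSubgroup ℤ :=
    { carrier := {s | r.r ((β y ^ s) b) b}
      zero_mem' := r.refl' b
      add_mem' := fun {s t} hs ht => by
        have := (hM.preserves c _ (zpow_mem (hβ y hy).1 s) _ _).1 ht
        show r.r ((β y ^ (s + t)) b) b
        rw [zpow_add, Perm.mul_apply]
        exact r.trans' this hs
      neg_mem' := fun {s} hs => (hβ.rel_zpow_neg_iff hM hy s).2 hs }
  obtain ⟨a, ha⟩ := Int.subgroup_cyclic H
  refine ⟨a.natAbs, fun s => ?_⟩
  rw [Int.natAbs_dvd, ← Int.mem_zmultiples_iff, AddSubgroup.zmultiples_eq_closure, ← ha]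
  rfl

theorem not_rel_zpow_apply {y : X} (hy : ¬ r.r y c) (s : ℤ) : ¬ r.r ((β y ^ s) b) c :=
  hM.not_rel_apply_of_mem (zpow_mem (hβ y hy).1 s) hbc

end IsRootParam

end RootGroups

section Conjugation

variable {r : Setoid X} {U : X → Subgroup (Perm X)} {c b c' b' : X} {β β' : X → Perm X}
  (hβ : IsRootParam r U c b β) (hβ' : IsRootParam r U c' b' β')
  (hM : IsLocalMoufangSet r U) (hb'c' : ¬ r.r b' c') {g : Perm X} (hg : g ∈ ⨆ y, U y)
  (hgc : g c = c') (hgb : g b = b')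
include hβ hβ' hM hb'c' hg hgc hgb

theorem IsRootParam.conj_eq {p : X} (hp : ¬ r.r p c) : g * β p * g⁻¹ = β' (g p) := by
  have hmem : g * β p * g⁻¹ ∈ U c' := by
    rw [← hgc, ← hM.lm2 c g hg]
    exact Subgroup.mem_map.2 ⟨β p, (hβ p hp).1, rfl⟩
  have hval : (g * β p * g⁻¹) b' = g p := by
    simp [← hgb, (hβ p hp).2]
  rw [hβ'.eq_apply hM hb'c' hmem, hval]

theorem IsRootParam.map_zpow_apply {p : X} (hp : ¬ r.r p c) (s : ℤ) :
    g ((β p ^ s) b) = (β' (g p) ^ s) b' := by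
  rw [← hβ.conj_eq hβ' hM hb'c' hg hgc hgb hp, conj_zpow, ← hgb]
  simp

end Conjugation

structure MoufangFrame (r : Setoid X) (U : X → Subgroup (Perm X)) (o i : X)
    (α γ : X → Perm X) : Prop where
  moufang : IsLocalMoufangSet r U
  not_rel : ¬ r.r o i
  α_param : IsRootParam r U i o α
  γ_param : IsRootParam r U o i γ

/-- `(α z)⁻¹ o` is the paper's `-z` and `(γ z)⁻¹ i` its `z̃`, so `special` says `z̃ = -z`. -/
structure SpecialFrame (r : Setoid X) (U : X → Subgroup (Perm X)) (o i : X)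
    (α γ : X → Perm X) : Prop extends MoufangFrame r U o i α γ where
  special : ∀ z, ¬ r.r z o → ¬ r.r z i → (γ z)⁻¹ i = (α z)⁻¹ o

def mu (α γ : X → Perm X) (y : X) : Perm X := (γ y)⁻¹ * α y * (γ y)⁻¹

/-- `y · k` is a unit for `1 ≤ k ≤ n`; only `≁ o` is required, as `y · k ≁ i` always holds. -/
def UnitMultiplesUpTo (r : Setoid X) (α : X → Perm X) (o y : X) (n : ℕ) : Prop :=
  ∀ k : ℕ, 1 ≤ k → k ≤ n → ¬ r.r ((α y ^ (k : ℤ)) o) o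

namespace MoufangFrame

variable {r : Setoid X} {U : X → Subgroup (Perm X)} {o i : X} {α γ : X → Perm X}
  (F : MoufangFrame r U o i α γ)
include F

theorem not_rel_symm : ¬ r.r i o := fun h => F.not_rel (r.symm' h)

section Swap

variable {g : Perm X} (hg : g ∈ ⨆ y, U y) (hgo : g o = i) (hgi : g i = o)
include hg hgo hgi

theorem conj_alpha {p : X} (hp : ¬ r.r p i) : g * α p * g⁻¹ = γ (g p) :=
  F.α_param.conj_eq F.γ_param F.moufang F.not_rel_symm hg hgi hgo hp

theorem conj_gamma {p : X} (hp : ¬ r.r p o) : g * γ p * g⁻¹ = α (g p) :=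
  F.γ_param.conj_eq F.α_param F.moufang F.not_rel hg hgo hgi hp

theorem map_alpha_zpow_apply {p : X} (hp : ¬ r.r p i) (s : ℤ) :
    g ((α p ^ s) o) = (γ (g p) ^ s) i :=
  F.α_param.map_zpow_apply F.γ_param F.moufang F.not_rel_symm hg hgi hgo hp s

theorem map_gamma_zpow_apply {p : X} (hp : ¬ r.r p o) (s : ℤ) :
    g ((γ p ^ s) i) = (α (g p) ^ s) o :=
  F.γ_param.map_zpow_apply F.α_param F.moufang F.not_rel hg hgo hgi hp s

end Swap

theorem alpha_inv_apply {y : X} (hyi : ¬ r.r y i) : α ((α y)⁻¹ o) = (α y)⁻¹ := by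
  simpa using F.α_param.apply_zpow F.moufang F.not_rel hyi (-1)

theorem alpha_apply {y p : X} (hyi : ¬ r.r y i) (hpi : ¬ r.r p i) : α (α y p) = α y * α p := by
  have h := F.α_param.eq_apply F.moufang F.not_rel
    (mul_mem (F.α_param y hyi).1 (F.α_param p hpi).1)
  rwa [Perm.mul_apply, (F.α_param p hpi).2, eq_comm] at h

theorem alpha_apply_i {y : X} (hyi : ¬ r.r y i) : α y i = i :=
  F.moufang.fixes i _ (F.α_param y hyi).1

theorem gamma_inv_apply_o {y : X} (hyo : ¬ r.r y o) : (γ y)⁻¹ o = o :=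
  Perm.inv_eq_iff_eq.2 (F.moufang.fixes o _ (F.γ_param y hyo).1).symm

theorem gamma_inv_apply_self {y : X} (hyo : ¬ r.r y o) : (γ y)⁻¹ y = i :=
  Perm.inv_eq_iff_eq.2 (F.γ_param y hyo).2.symm

variable {y : X} (hyo : ¬ r.r y o) (hyi : ¬ r.r y i)
include hyo hyi

theorem mu_mem_iSup : mu α γ y ∈ ⨆ c, U c :=
  have hγ := le_iSup U _ (inv_mem (F.γ_param y hyo).1)
  mul_mem (mul_mem hγ (le_iSup U _ (F.α_param y hyi).1)) hγ

theorem mu_apply_o : mu α γ y o = i := by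
  simp only [mu, Perm.mul_apply, F.gamma_inv_apply_o hyo, (F.α_param y hyi).2,
    F.gamma_inv_apply_self hyo]

end MoufangFrame

namespace SpecialFrame

variable {r : Setoid X} {U : X → Subgroup (Perm X)} {o i : X} {α γ : X → Perm X}
  (S : SpecialFrame r U o i α γ)
include S

section Unit

variable {y : X} (hyo : ¬ r.r y o) (hyi : ¬ r.r y i)
include hyo hyi

theorem gamma_inv_apply : γ ((α y)⁻¹ o) = (γ y)⁻¹ := by
  rw [← S.special y hyo hyi]
  exact (S.γ_param.eq_apply S.moufang S.not_rel_symm (inv_mem (S.γ_param y hyo).1)).symm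

theorem mu_apply_i : mu α γ y i = o := by
  simp only [mu, Perm.mul_apply, S.special y hyo hyi, Perm.coe_inv, apply_symm_apply]
  exact S.gamma_inv_apply_o hyo

theorem mu_apply_self : mu α γ y y = (α y)⁻¹ o := by
  simp only [mu, Perm.mul_apply, S.gamma_inv_apply_self hyo, S.alpha_apply_i hyi]
  exact S.special y hyo hyi

theorem mu_apply_alpha_zpow (s : ℤ) : mu α γ y ((α y ^ s) o) = (γ y ^ (-s)) i := by
  rw [S.map_alpha_zpow_apply (S.mu_mem_iSup hyo hyi) (S.mu_apply_o hyo hyi) (S.mu_apply_i hyo hyi)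
    hyi, S.mu_apply_self hyo hyi, S.gamma_inv_apply hyo hyi, inv_zpow, zpow_neg]

theorem mu_apply_gamma_zpow (s : ℤ) : mu α γ y ((γ y ^ s) i) = (α y ^ (-s)) o := by
  rw [S.map_gamma_zpow_apply (S.mu_mem_iSup hyo hyi) (S.mu_apply_o hyo hyi) (S.mu_apply_i hyo hyi)
    hyo, S.mu_apply_self hyo hyi, S.alpha_inv_apply hyi, inv_zpow, zpow_neg]

theorem gamma_zpow_rel_iff (s : ℤ) : r.r ((γ y ^ s) i) i ↔ r.r ((α y ^ s) o) o := by
  have h := S.moufang.preservesRel_of_mem_iSup (S.mu_mem_iSup hyo hyi) ((α y ^ (-s)) o) o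
  rw [S.mu_apply_alpha_zpow hyo hyi, neg_neg, S.mu_apply_o hyo hyi] at h
  rw [← h, S.α_param.rel_zpow_neg_iff S.moufang hyi]

theorem conj_mu_alpha_self : mu α γ y * α y * (mu α γ y)⁻¹ = (γ y)⁻¹ := by
  rw [S.conj_alpha (S.mu_mem_iSup hyo hyi) (S.mu_apply_o hyo hyi) (S.mu_apply_i hyo hyi) hyi,
    S.mu_apply_self hyo hyi, S.gamma_inv_apply hyo hyi]

theorem mu_inv_apply_gamma_zpow (s : ℤ) : (mu α γ y)⁻¹ ((γ y ^ s) i) = (α y ^ (-s)) o :=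
  Perm.inv_eq_iff_eq.2 (by rw [S.mu_apply_alpha_zpow hyo hyi, neg_neg])

theorem mu_inv_apply_alpha_zpow (s : ℤ) : (mu α γ y)⁻¹ ((α y ^ s) o) = (γ y ^ (-s)) i :=
  Perm.inv_eq_iff_eq.2 (by rw [S.mu_apply_gamma_zpow hyo hyi, neg_neg])

theorem mu_apply_alpha_apply (m : ℤ) :
    mu α γ y (α y ((γ y ^ m) i)) = (α y)⁻¹ ((γ y ^ (m + 1)) i) := by
  have hα : α y = γ y * mu α γ y * γ y := by simp only [mu]; group
  calc mu α γ y (α y ((γ y ^ m) i))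
      = (γ y)⁻¹ (mu α γ y ((γ y ^ m) i)) := by
        rw [← S.conj_mu_alpha_self hyo hyi]; simp
    _ = (γ y)⁻¹ ((mu α γ y)⁻¹ ((γ y ^ m) i)) := by
        rw [S.mu_apply_gamma_zpow hyo hyi, S.mu_inv_apply_gamma_zpow hyo hyi]
    _ = (α y)⁻¹ ((γ y ^ (m + 1)) i) := by
        conv_rhs => rw [hα, add_comm, zpow_one_add]
        simp

theorem alpha_zpow_gamma_zpow_rel_iff {p : ℤ} (hp : ¬ r.r ((α y ^ p) o) o) (s : ℤ) :
    r.r ((α ((γ y ^ p) i) ^ s) o) o ↔ r.r ((α y ^ (p * s)) o) o := by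
  set w := (γ y ^ p) i
  set c := (α y ^ (-p)) o
  have hwi : ¬ r.r w i := mt (S.gamma_zpow_rel_iff hyo hyi p).1 hp
  have hco : ¬ r.r c o := by rwa [S.α_param.rel_zpow_neg_iff S.moufang hyi]
  have hci : ¬ r.r c i := S.α_param.not_rel_zpow_apply S.moufang S.not_rel hyi (-p)
  have hmu : mu α γ y ((α w ^ s) o) = (γ c ^ s) i := by
    rw [S.map_alpha_zpow_apply (S.mu_mem_iSup hyo hyi) (S.mu_apply_o hyo hyi)
      (S.mu_apply_i hyo hyi) hwi, S.mu_apply_gamma_zpow hyo hyi]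
  calc r.r ((α w ^ s) o) o
      ↔ r.r (mu α γ y ((α w ^ s) o)) (mu α γ y o) :=
        S.moufang.preservesRel_of_mem_iSup (S.mu_mem_iSup hyo hyi) _ _
    _ ↔ r.r ((α c ^ s) o) o := by rw [hmu, S.mu_apply_o hyo hyi, S.gamma_zpow_rel_iff hco hci]
    _ ↔ r.r ((α y ^ (p * s)) o) o := by
        rw [S.α_param.zpow_apply_zpow S.moufang S.not_rel hyi, neg_mul,
          S.α_param.rel_zpow_neg_iff S.moufang hyi]

section Multiple

variable {s : ℤ} (hs : ¬ r.r ((α y ^ s) o) o)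
include hs

omit hyo in
theorem gamma_alpha_zpow_neg : γ ((α y ^ (-s)) o) = (γ ((α y ^ s) o))⁻¹ := by
  rw [← S.gamma_inv_apply hs (S.α_param.not_rel_zpow_apply S.moufang S.not_rel hyi s),
    S.α_param.apply_zpow S.moufang S.not_rel hyi, zpow_neg]

theorem alpha_gamma_zpow_neg : α ((γ y ^ (-s)) i) = (α ((γ y ^ s) i))⁻¹ := by
  have hwo := S.γ_param.not_rel_zpow_apply S.moufang S.not_rel_symm hyo s
  have hwi := mt (S.gamma_zpow_rel_iff hyo hyi s).1 hs
  rw [← S.alpha_inv_apply hwi, ← S.special _ hwo hwi,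
    S.γ_param.apply_zpow S.moufang S.not_rel_symm hyo, zpow_neg]

theorem gamma_zpow_eq_of_alpha_zpow_eq (h : α ((γ y ^ s) i) ^ s = α y) :
    γ ((α y ^ s) o) ^ s = γ y := by
  have hwi := mt (S.gamma_zpow_rel_iff hyo hyi s).1 hs
  have hconj : mu α γ y * α ((γ y ^ s) i) * (mu α γ y)⁻¹ = (γ ((α y ^ s) o))⁻¹ := by
    rw [S.conj_alpha (S.mu_mem_iSup hyo hyi) (S.mu_apply_o hyo hyi) (S.mu_apply_i hyo hyi) hwi,
      S.mu_apply_gamma_zpow hyo hyi, S.gamma_alpha_zpow_neg hyi hs]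
  have hpow := congrArg (· ^ s) hconj
  simp only [conj_zpow, h, S.conj_mu_alpha_self hyo hyi, inv_zpow] at hpow
  exact inv_injective hpow.symm

theorem conj_mu_mu_alpha_zpow :
    mu α γ y * mu α γ ((α y ^ s) o) * (mu α γ y)⁻¹ =
      α ((γ y ^ s) i) * (γ ((γ y ^ s) i))⁻¹ * α ((γ y ^ s) i) := by
  have hci := S.α_param.not_rel_zpow_apply S.moufang S.not_rel hyi s
  have hG := S.mu_mem_iSup hyo hyi
  have hA : mu α γ y * α ((α y ^ s) o) * (mu α γ y)⁻¹ = (γ ((γ y ^ s) i))⁻¹ := by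
    rw [S.conj_alpha hG (S.mu_apply_o hyo hyi) (S.mu_apply_i hyo hyi) hci,
      S.mu_apply_alpha_zpow hyo hyi, S.γ_param.apply_zpow S.moufang S.not_rel_symm hyo,
      S.γ_param.apply_zpow S.moufang S.not_rel_symm hyo, zpow_neg]
  have hC : mu α γ y * γ ((α y ^ s) o) * (mu α γ y)⁻¹ = (α ((γ y ^ s) i))⁻¹ := by
    rw [S.conj_gamma hG (S.mu_apply_o hyo hyi) (S.mu_apply_i hyo hyi) hs,
      S.mu_apply_alpha_zpow hyo hyi, S.alpha_gamma_zpow_neg hyo hyi hs]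
  calc mu α γ y * mu α γ ((α y ^ s) o) * (mu α γ y)⁻¹
      = (mu α γ y * γ ((α y ^ s) o) * (mu α γ y)⁻¹)⁻¹ *
          (mu α γ y * α ((α y ^ s) o) * (mu α γ y)⁻¹) *
          (mu α γ y * γ ((α y ^ s) o) * (mu α γ y)⁻¹)⁻¹ := by
        simp only [mu]; group
    _ = _ := by rw [hA, hC, inv_inv]

end Multiple

/-- `α z * (γ z)⁻¹ * α z` and `μ_z` differ by an element fixing `o`, `i` and `z`, which
therefore commutes with `γ z`. -/
theorem alpha_gamma_inv_alpha_apply (s : ℤ) :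
    (α y * (γ y)⁻¹ * α y) ((α y ^ (-s)) o) = (γ y ^ s) i := by
  set l := α y * (γ y)⁻¹ * α y * mu α γ y
  have hαG := le_iSup U _ (S.α_param y hyi).1
  have hlG : l ∈ ⨆ c, U c :=
    mul_mem (mul_mem (mul_mem hαG (le_iSup U _ (inv_mem (S.γ_param y hyo).1))) hαG)
      (S.mu_mem_iSup hyo hyi)
  have hlo : l o = o := by
    simp only [l, Perm.mul_apply, S.mu_apply_o hyo hyi, S.alpha_apply_i hyi, S.special y hyo hyi,
      Perm.coe_inv, apply_symm_apply]
  have hli : l i = i := by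
    simp only [l, Perm.mul_apply, S.mu_apply_i hyo hyi, (S.α_param y hyi).2,
      S.gamma_inv_apply_self hyo, S.alpha_apply_i hyi]
  have hly : l y = y := by
    simp only [l, Perm.mul_apply, S.mu_apply_self hyo hyi, Perm.coe_inv, apply_symm_apply]
    rw [← Perm.coe_inv, S.gamma_inv_apply_o hyo, (S.α_param y hyi).2]
  have hfix : l ((γ y ^ s) i) = (γ y ^ s) i := by
    rw [S.γ_param.map_zpow_apply S.γ_param S.moufang S.not_rel_symm hlG hlo hli hyo, hly]
  rw [← S.mu_apply_gamma_zpow hyo hyi]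
  exact hfix

theorem alpha_root_eq_of_gamma_root {m : ℤ} (hc : ¬ r.r ((α y ^ (m + 1)) o) o)
    (hR : (γ ((α y ^ (m + 1)) o) ^ m) i = α y ((γ y ^ m) i)) :
    α ((γ y ^ (m + 1)) i) ^ (m + 1) = α y := by
  set c := (α y ^ (m + 1)) o
  set w := (γ y ^ (m + 1)) i
  have hci : ¬ r.r c i := S.α_param.not_rel_zpow_apply S.moufang S.not_rel hyi _
  have hwo : ¬ r.r w o := S.γ_param.not_rel_zpow_apply S.moufang S.not_rel_symm hyo _
  have hwi : ¬ r.r w i := mt (S.gamma_zpow_rel_iff hyo hyi _).1 hc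
  have hkey : (α w ^ (-m)) o = (α y)⁻¹ w := by
    calc (α w ^ (-m)) o
        = (α w * (γ w)⁻¹ * α w)⁻¹ ((γ w ^ m) i) :=
          Perm.eq_inv_iff_eq.2 (S.alpha_gamma_inv_alpha_apply hwo hwi m)
      _ = mu α γ y ((mu α γ c)⁻¹ ((mu α γ y)⁻¹ ((γ y ^ ((m + 1) * m)) i))) := by
          rw [← S.conj_mu_mu_alpha_zpow hyo hyi hc, S.γ_param.zpow_apply_zpow S.moufang
            S.not_rel_symm hyo]
          simp [mul_assoc, c]
      _ = mu α γ y ((γ c ^ m) i) := by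
          rw [S.mu_inv_apply_gamma_zpow hyo hyi, ← mul_neg,
            ← S.α_param.zpow_apply_zpow S.moufang S.not_rel hyi, S.mu_inv_apply_alpha_zpow hc hci,
            neg_neg]
      _ = (α y)⁻¹ w := by rw [hR, S.mu_apply_alpha_apply hyo hyi]
  have hinv : α w ^ (-m) = (α y)⁻¹ * α w :=
    S.moufang.eq_of_mem_of_apply_eq (zpow_mem (S.α_param w hwi).1 _)
      (mul_mem (inv_mem (S.α_param y hyi).1) (S.α_param w hwi).1) S.not_rel
      (by rw [hkey, Perm.mul_apply, (S.α_param w hwi).2])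
  rw [add_comm, zpow_add, zpow_one, ← inv_inv (α w ^ m), ← zpow_neg, hinv]
  group

theorem eq_zero_of_dvd_period {q : ℕ} (hq : ∀ s : ℤ, r.r ((α y ^ s) o) o ↔ (q : ℤ) ∣ s)
    {d : ℕ} (hd : 2 ≤ d) (hyd : ¬ r.r ((α y ^ (d : ℤ)) o) o)
    (hroot : α ((γ y ^ (d : ℤ)) i) ^ (d : ℤ) = α y) (hdq : d ∣ q) : q = 0 := by
  obtain ⟨m, rfl⟩ := hdq
  have hm : r.r ((α y ^ (m : ℤ)) o) o := by
    rw [← hroot, ← zpow_mul, S.alpha_zpow_gamma_zpow_rel_iff hyo hyi hyd, hq]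
    push_cast
    exact dvd_mul_left _ _
  have hdm : d * m ∣ m := by exact_mod_cast (hq m).1 hm
  obtain rfl | hm0 := eq_or_ne m 0
  · rfl
  · have := Nat.le_of_dvd (Nat.pos_of_ne_zero hm0) hdm
    nlinarith [Nat.pos_of_ne_zero hm0]

theorem unitMultiplesUpTo_alpha_apply {m : ℕ} (hy : UnitMultiplesUpTo r α o y (m + 1))
    (hroot : ∀ d : ℕ, 1 ≤ d → d ≤ m → α ((γ y ^ (d : ℤ)) i) ^ (d : ℤ) = α y) :
    UnitMultiplesUpTo r α o (α y ((γ y ^ (m : ℤ)) i)) m := by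
  intro j hj hjm
  set w := (γ y ^ (m : ℤ)) i
  have hym := hy m (by omega) (by omega)
  have hwi : ¬ r.r w i := mt (S.gamma_zpow_rel_iff hyo hyi m).1 hym
  have hαR : α (α y w) = α w ^ ((m : ℤ) + 1) := by
    rw [S.alpha_apply hyi hwi, zpow_add_one, hroot m (by omega) le_rfl]
  obtain ⟨q, hq⟩ := S.α_param.exists_period S.moufang hyi
  have hqm : ¬ q ∣ m + 1 := fun h => hy (m + 1) (by omega) le_rfl ((hq _).2 (by exact_mod_cast h))
  have hsmall : ∀ d, 2 ≤ d → d ≤ m → d ∣ q → q = 0 := fun d hd hdm =>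
    S.eq_zero_of_dvd_period hyo hyi hq hd (hy d (by omega) (by omega)) (hroot d (by omega) hdm)
  rw [hαR, ← zpow_mul, S.alpha_zpow_gamma_zpow_rel_iff hyo hyi hym, hq]
  exact_mod_cast Nat.not_dvd_mul_of_no_small_divisor hj hjm hsmall hqm

end Unit

theorem alpha_gamma_zpow_zpow_eq (n : ℕ) (hn : 1 ≤ n) {y : X} (hyo : ¬ r.r y o)
    (hyi : ¬ r.r y i) (hy : UnitMultiplesUpTo r α o y n) :
    α ((γ y ^ (n : ℤ)) i) ^ (n : ℤ) = α y := by
  induction n using Nat.strong_induction_on generalizing y with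
  | _ n ih =>
  obtain ⟨m, rfl⟩ : ∃ m, n = m + 1 := ⟨n - 1, by omega⟩
  obtain rfl | hm := eq_or_ne m 0
  · simp [(S.γ_param y hyo).2]
  set R := α y ((γ y ^ (m : ℤ)) i)
  have hroot : ∀ d : ℕ, 1 ≤ d → d ≤ m → α ((γ y ^ (d : ℤ)) i) ^ (d : ℤ) = α y :=
    fun d hd hdm => ih d (by omega) hd hyo hyi fun k hk hkd => hy k hk (by omega)
  have hR : UnitMultiplesUpTo r α o R m := S.unitMultiplesUpTo_alpha_apply hyo hyi hy hroot
  have hwi : ¬ r.r ((γ y ^ (m : ℤ)) i) i :=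
    mt (S.gamma_zpow_rel_iff hyo hyi m).1 (hy m (by omega) (by omega))
  have hRi : ¬ r.r R i := S.moufang.not_rel_apply_of_mem (S.α_param y hyi).1 hwi
  have hRo : ¬ r.r R o := by simpa [(S.α_param R hRi).2] using hR 1 (by omega) (by omega)
  have hRm : (α R ^ (m : ℤ)) o = (α y ^ ((m : ℤ) + 1)) o := by
    rw [S.alpha_apply hyi hwi, ← hroot m (by omega) le_rfl, ← zpow_add_one, ← zpow_mul,
      mul_comm, zpow_mul]
  have hγ := S.gamma_zpow_eq_of_alpha_zpow_eq hRo hRi (hR m (by omega) le_rfl)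
    (ih m (by omega) (by omega) hRo hRi hR)
  rw [hRm] at hγ
  push_cast
  refine S.alpha_root_eq_of_gamma_root hyo hyi (by exact_mod_cast hy (m + 1) (by omega) le_rfl) ?_
  rw [hγ, (S.γ_param R hRo).2]

theorem alpha_pow_apply_eq_iff {n : ℕ} (hn : 1 ≤ n) {x : X} (hxo : ¬ r.r x o) (hxi : ¬ r.r x i)
    (hx : UnitMultiplesUpTo r α o x n) (y : X) (hyi : ¬ r.r y i) :
    (α y ^ n) o = x ↔ y = (γ x ^ (n : ℤ)) i := by
  constructor
  · intro hyx
    have hαy : α y ^ n = α x := S.moufang.eq_of_mem_of_apply_eq (pow_mem (S.α_param y hyi).1 n)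
      (S.α_param x hxi).1 S.not_rel (by rw [hyx, (S.α_param x hxi).2])
    have hy : UnitMultiplesUpTo r α o y n := fun k hk hkn hyk => by
      have := (S.moufang.preserves i _ (zpow_mem (S.α_param y hyi).1 k)).rel_pow_apply hyk n
      rw [← zpow_natCast, ← zpow_mul, mul_comm, zpow_mul, zpow_natCast (α y) n, hαy] at this
      exact hx k hk hkn this
    have hyo : ¬ r.r y o := by simpa [(S.α_param y hyi).2] using hy 1 le_rfl hn
    have h := S.gamma_zpow_eq_of_alpha_zpow_eq hyo hyi (hy n hn le_rfl)
      (S.alpha_gamma_zpow_zpow_eq n hn hyo hyi hy)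
    rw [zpow_natCast (α y) n, hyx] at h
    rw [h, (S.γ_param y hyo).2]
  · rintro rfl
    rw [← zpow_natCast, S.alpha_gamma_zpow_zpow_eq n hn hxo hxi hx, (S.α_param x hxi).2]

theorem unitMultiplesUpTo_map {g : Perm X} (hg : g ∈ ⨆ y, U y) (hgo : g o = i) (hgi : g i = o)
    {x : X} (hxo : ¬ r.r x o) (hxi : ¬ r.r x i) {n : ℕ} (hx : UnitMultiplesUpTo r α o x n) :
    UnitMultiplesUpTo r α o (g x) n := fun k hk hkn => by
  rw [← S.map_gamma_zpow_apply hg hgo hgi hxo, ← hgi,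
    ← S.moufang.preservesRel_of_mem_iSup hg, S.gamma_zpow_rel_iff hxo hxi]
  exact hx k hk hkn

end SpecialFrame

theorem MoufangFrame.specialFrame_of_swap {r : Setoid X} {U : X → Subgroup (Perm X)} {o i : X}
    {α γ : X → Perm X} (F : MoufangFrame r U o i α γ) {τ : Perm X} (hτ : τ ∈ ⨆ y, U y)
    (hτo : τ o = i) (hτi : τ i = o)
    (hspecial : ∀ y, ¬ r.r y o → ¬ r.r y i → τ ((α y)⁻¹ o) = (α (τ y))⁻¹ o) :
    SpecialFrame r U o i α γ := by
  refine ⟨F, fun z hzo hzi => ?_⟩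
  obtain ⟨y, rfl⟩ := τ.surjective z
  have hτP := F.moufang.preservesRel_of_mem_iSup hτ
  have hyo : ¬ r.r y o := by rwa [hτP, hτo]
  have hyi : ¬ r.r y i := by rwa [hτP, hτi]
  rw [← hspecial y hyo hyi, ← F.conj_alpha hτ hτo hτi hyi]
  simp [τ.symm_apply_eq.2 hτo.symm]

theorem IsMuMap.mem_iSup {U : X → Subgroup (Perm X)} {o i e : X} {τ : Perm X}
    (hτ : IsMuMap U o i e τ) : τ ∈ ⨆ y, U y := by
  obtain ⟨a, ha, -, ⟨u, hu, v, hv, rfl⟩, -⟩ := hτ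
  exact mul_mem (mul_mem (le_iSup U o hu) (le_iSup U i ha)) (le_iSup U o hv)

theorem statement11_general (r : Setoid X) (U : X → Subgroup (Equiv.Perm X))
    (hM : IsLocalMoufangSet r U) (o i : X) (hoi : ¬ r.r o i)
    (α : X → Equiv.Perm X) (hα : ∀ y : X, ¬ r.r y i → α y ∈ U i ∧ α y o = y)
    (τ : Equiv.Perm X) (e : X)
    (hτ : IsMuMap U o i e τ)
    (hspecial : ∀ y : X, ¬ r.r y o → ¬ r.r y i → τ ((α y)⁻¹ o) = (α (τ y))⁻¹ o)
    (n : ℕ) (hn : 1 ≤ n) (x : X) (hxo : ¬ r.r x o) (hxi : ¬ r.r x i)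
    (hpow : ∀ k : ℕ, 1 ≤ k → k ≤ n →
      ¬ r.r ((α x ^ k) o) o ∧ ¬ r.r ((α x ^ k) o) i) :
    (∃! y : X, ¬ r.r y i ∧ (α y ^ n) o = x) ∧
    (∀ z : X, ¬ r.r z i → (α z ^ n) o = τ x → τ ((α x ^ n) o) = z) ∧
    (∀ y : X, ¬ r.r y i → (α y ^ n) o = x → τ y = (α (τ x) ^ n) o) := by
  obtain ⟨γ, hγ⟩ := hM.exists_isRootParam (fun h => hoi (r.symm' h))
  have hτG := hτ.mem_iSup
  obtain ⟨-, -, -, -, hτo, hτi⟩ := hτ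
  have S : SpecialFrame r U o i α γ :=
    MoufangFrame.specialFrame_of_swap ⟨hM, hoi, hα, hγ⟩ hτG hτo hτi hspecial
  have hx : UnitMultiplesUpTo r α o x n := fun k hk hkn => by simpa using (hpow k hk hkn).1
  have hτP := hM.preservesRel_of_mem_iSup hτG
  have hτxo : ¬ r.r (τ x) o := by rwa [← hτi, ← hτP]
  have hτxi : ¬ r.r (τ x) i := by rwa [← hτo, ← hτP]
  have hroot := S.alpha_pow_apply_eq_iff hn hxo hxi hx
  have hτroot := S.alpha_pow_apply_eq_iff hn hτxo hτxi
    (S.unitMultiplesUpTo_map hτG hτo hτi hxo hxi hx)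
  have hri : ¬ r.r ((γ x ^ (n : ℤ)) i) i := mt (S.gamma_zpow_rel_iff hxo hxi n).1 (hx n hn le_rfl)
  refine ⟨⟨(γ x ^ (n : ℤ)) i, ⟨hri, (hroot _ hri).2 rfl⟩, fun y hy => (hroot y hy.1).1 hy.2⟩,
    fun z hz hzx => ?_, fun y hy hyx => ?_⟩
  · rw [(hτroot z hz).1 hzx, ← zpow_natCast, S.map_alpha_zpow_apply hτG hτo hτi hxi]
  · rw [(hroot y hy).1 hyx, S.map_gamma_zpow_apply hτG hτo hτi hxo, zpow_natCast]

/-- unique `n`-divisibility of units in a special local Moufang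
set.  Here `(o, i) = (0, ∞)`, `α y` is the unique element of `U ∞` with
`0 · α_y = y` (for `y ≁ ∞`), `x · k := 0 · α_x ^ k`, `τ = μ_e` is a μ-map, and
`M` is special: `(-y)τ = -(yτ)` for all units `y`, where `-y = (α_y)⁻¹ 0`.
If `x · k` is a unit for all `1 ≤ k ≤ n`, then there is a unique `y` with
`y · n = x`; moreover `(x · n)τ = (xτ) · (1/n)` (i.e. `(xτ) · n`-th roots land on
`(x·n)τ`) and `(x · (1/n))τ = (xτ) · n`. -/
theorem statement11 (r : Setoid X) (U : X → Subgroup (Equiv.Perm X))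
    (hM : IsLocalMoufangSet r U) (o i : X) (hoi : ¬ r.r o i)
    (α : X → Equiv.Perm X) (hα : ∀ y : X, ¬ r.r y i → α y ∈ U i ∧ α y o = y)
    (τ : Equiv.Perm X) (e : X) (heo : ¬ r.r e o) (hei : ¬ r.r e i)
    (hτ : IsMuMap U o i e τ)
    (hspecial : ∀ y : X, ¬ r.r y o → ¬ r.r y i → τ ((α y)⁻¹ o) = (α (τ y))⁻¹ o)
    (n : ℕ) (hn : 1 ≤ n) (x : X) (hxo : ¬ r.r x o) (hxi : ¬ r.r x i)
    (hpow : ∀ k : ℕ, 1 ≤ k → k ≤ n →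
      ¬ r.r ((α x ^ k) o) o ∧ ¬ r.r ((α x ^ k) o) i) :
    (∃! y : X, ¬ r.r y i ∧ (α y ^ n) o = x) ∧
    (∀ z : X, ¬ r.r z i → (α z ^ n) o = τ x → τ ((α x ^ n) o) = z) ∧
    (∀ y : X, ¬ r.r y i → (α y ^ n) o = x → τ y = (α (τ x) ^ n) o) :=
  statement11_general r U hM o i hoi α hα τ e hτ hspecial n hn x hxo hxi hpow
end

section
/- Let M be a special local Moufang set with abelian root group U_∞ and n ∈ ℕ. If for every unit x and every 1 ≤ k ≤ n, x·k is also a unit, then the group U_∞ is uniquely k-divisible for all 1 ≤ k ≤ n. -/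
/-!
Local Moufang sets, following E. Rijcken, "Local Moufang sets".
A local Moufang set is a set `X` with an equivalence relation (a `Setoid`)
having more than 2 classes, together with root groups `U x` of
equivalence-preserving permutations, satisfying (LM0), (LM1), (LM1'), (LM2).
We use left actions; the paper's right-composition word `a₁a₂⋯aₙ` corresponds
to our product `aₙ * ⋯ * a₁`, and the paper's conjugation `g^h = h⁻¹gh`
corresponds to `h * g * h⁻¹` (i.e. `MulAut.conj h g`).
-/

variable {X : Type*}

/-!
Let `β y ∈ U 0` be the coordinate sending `∞` to `y`, the `τ`-conjugate of `α`, and write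
`y ·' m = ∞ · β_y ^ m` next to `y · m = 0 · α_y ^ m`. By induction on `k`, `U ∞` has no
`k`-torsion and `y ↦ y ·' k` is a right inverse of `y ↦ y · k` on units. The inductive step
rests on the identity `μ_w (y) = y · (-(k+1)²)` for `w = y · (k+1)`, obtained from the
commutativity of `U 0` in the form `α_p (μ_p⁻¹ (p + q)) = α_q (μ_q⁻¹ (p + q))`, where
`p + q = α_p q`; since also `μ_w (w ·' m) = w · (-m)`, it yields `(y · (k+1)) ·' (k+1) = y`.
The `k`-th root of `α_p` is then `α_{p ·' k}`, and every element of `U ∞` is some `α_p` or,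
when it fixes the class of `0`, a quotient `α_p α_q⁻¹`.
-/

open Equiv Set

lemma PreservesRel.mul {r : Setoid X} {g h : Perm X} (hg : PreservesRel r g)
    (hh : PreservesRel r h) : PreservesRel r (g * h) :=
  fun a b => (hh a b).trans (hg (h a) (h b))

lemma Equiv.Perm.conj_zpow_apply (g a : Perm X) (m : ℤ) (x : X) :
    ((g * a * g⁻¹) ^ m) (g x) = g ((a ^ m) x) := by
  rw [← MulAut.conj_apply, ← map_zpow, MulAut.conj_apply]
  simp only [Perm.mul_apply, Perm.coe_inv, Equiv.symm_apply_apply]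

lemma eq_of_pow_eq_of_noTorsion {G : Type*} [Group G] {H : Subgroup G} {k : ℕ}
    (hH : ∀ v ∈ H, v ^ k = 1 → v = 1) {a b : G} (ha : a ∈ H) (hb : b ∈ H)
    (hab : Commute a b) (h : a ^ k = b ^ k) : a = b := by
  have : (a * b⁻¹) ^ k = 1 := by rw [(hab.inv_right).mul_pow, inv_pow, h, mul_inv_cancel]
  exact mul_inv_eq_one.mp (hH _ (mul_mem ha (inv_mem hb)) this)

namespace IsLocalPreMoufangSet

variable {r : Setoid X} {U : X → Subgroup (Perm X)} (hM : IsLocalPreMoufangSet r U)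
include hM

lemma not_rel_apply {x a : X} {g : Perm X} (hg : g ∈ U x) (ha : ¬ r.r a x) :
    ¬ r.r (g a) x := by
  rwa [← hM.fixes x g hg, ← hM.preserves x g hg]

lemma eq_of_apply_eq {x a : X} {g g' : Perm X} (hg : g ∈ U x) (hg' : g' ∈ U x)
    (ha : ¬ r.r a x) (h : g a = g' a) : g = g' :=
  (hM.lm1 x a (g a) ha (hM.not_rel_apply hg ha)).unique ⟨hg, rfl⟩ ⟨hg', h.symm⟩

lemma rel_apply_of_rel_apply {x a : X} {g : Perm X} (hg : g ∈ U x) (ha : ¬ r.r a x)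
    (hga : r.r (g a) a) (b : X) : r.r (g b) b :=
  hM.lm1'_sharp x g hg 1 (one_mem _) a ha hga b

lemma preservesRel_of_mem_iSup {g : Perm X} (hg : g ∈ ⨆ y, U y) : PreservesRel r g :=
  Subgroup.iSup_induction (C := PreservesRel r) U hg (fun x g hg => hM.preserves x g hg)
    (fun _ _ => Iff.rfl) (fun _ _ => PreservesRel.mul)

lemma exists_not_rel_not_rel (o i : X) : ∃ x, ¬ r.r x o ∧ ¬ r.r x i := by
  obtain ⟨a, b, c, hab, hac, hbc⟩ := hM.big
  by_contra! h
  have hclass : ∀ {p q z : X}, r.r p z → r.r q z → r.r p q :=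
    fun hp hq => Setoid.trans hp (Setoid.symm hq)
  rcases em (r.r a o) with ha | ha <;> rcases em (r.r b o) with hb | hb <;>
    rcases em (r.r c o) with hc | hc
  all_goals first
    | exact hab (hclass ha hb) | exact hac (hclass ha hc) | exact hbc (hclass hb hc)
    | exact hab (hclass (h a ha) (h b hb)) | exact hac (hclass (h a ha) (h c hc))
    | exact hbc (hclass (h b hb) (h c hc))

end IsLocalPreMoufangSet

lemma IsLocalMoufangSet.conj_mem {r : Setoid X} {U : X → Subgroup (Perm X)}
    (hM : IsLocalMoufangSet r U) {x : X} {g h : Perm X} (hg : g ∈ ⨆ y, U y) (hh : h ∈ U x) :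
    g * h * g⁻¹ ∈ U (g x) := by
  rw [← hM.lm2 x g hg]
  exact ⟨h, hh, rfl⟩

/-- A local Moufang set with a basis `(o, i) = (0, ∞)`, coordinates `α y ∈ U ∞` sending `0`
to `y`, abelian `U ∞`, and a special μ-map `τ` (only its membership in the little projective
group and the swap of `0` and `∞` are retained). -/
structure SpecialFrame_s12 (X : Type*) where
  r : Setoid X
  U : X → Subgroup (Perm X)
  isLocalMoufangSet : IsLocalMoufangSet r U
  o : X
  i : X
  o_not_rel_i : ¬ r.r o i
  α : X → Perm X
  α_mem : ∀ y, ¬ r.r y i → α y ∈ U i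
  α_apply_o : ∀ y, ¬ r.r y i → α y o = y
  τ : Perm X
  τ_mem_iSup : τ ∈ ⨆ y, U y
  τ_o : τ o = i
  τ_i : τ i = o
  special : ∀ y, ¬ r.r y o → ¬ r.r y i → τ ((α y)⁻¹ o) = (α (τ y))⁻¹ o
  comm : ∀ a ∈ U i, ∀ b ∈ U i, a * b = b * a

namespace SpecialFrame_s12

variable (C : SpecialFrame_s12 X)

def IsUnitPoint (y : X) : Prop := ¬ C.r.r y C.o ∧ ¬ C.r.r y C.i

def unitPoints : Set X := {y | C.IsUnitPoint y}

lemma i_not_rel_o : ¬ C.r.r C.i C.o := fun h => C.o_not_rel_i (C.r.iseqv.symm h)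

lemma preMoufang : IsLocalPreMoufangSet C.r C.U := C.isLocalMoufangSet.toIsLocalPreMoufangSet

lemma exists_isUnitPoint : ∃ x, C.IsUnitPoint x := C.preMoufang.exists_not_rel_not_rel C.o C.i

variable {C}

lemma isUnitPoint_apply_of_swap {g : Perm X} (hg : g ∈ ⨆ y, C.U y) (ho : g C.o = C.i)
    (hi : g C.i = C.o) {y : X} (hy : C.IsUnitPoint y) : C.IsUnitPoint (g y) := by
  have hpres := C.preMoufang.preservesRel_of_mem_iSup hg
  exact ⟨by rw [← hi, ← hpres]; exact hy.2, by rw [← ho, ← hpres]; exact hy.1⟩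

lemma commute_of_mem {a b : Perm X} (ha : a ∈ C.U C.i) (hb : b ∈ C.U C.i) : Commute a b :=
  C.comm a ha b hb

lemma eq_α {y : X} (hy : ¬ C.r.r y C.i) {g : Perm X} (hg : g ∈ C.U C.i) (h : g C.o = y) :
    g = C.α y :=
  C.preMoufang.eq_of_apply_eq hg (C.α_mem y hy) C.o_not_rel_i (by rw [h, C.α_apply_o y hy])

lemma α_apply {g : Perm X} (hg : g ∈ C.U C.i) {p : X} (hp : ¬ C.r.r p C.i) :
    C.α (g p) = g * C.α p :=
  (C.eq_α (C.preMoufang.not_rel_apply hg hp) (mul_mem hg (C.α_mem p hp))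
    (by rw [Perm.mul_apply, C.α_apply_o p hp])).symm

lemma α_apply_comm {p q : X} (hp : ¬ C.r.r p C.i) (hq : ¬ C.r.r q C.i) :
    C.α p q = C.α q p := by
  conv_lhs => rw [← C.α_apply_o q hq]
  conv_rhs => rw [← C.α_apply_o p hp]
  rw [← Perm.mul_apply, ← Perm.mul_apply, C.comm _ (C.α_mem p hp) _ (C.α_mem q hq)]

variable (C)

/-- The paper's `-y`. -/
def neg (y : X) : X := (C.α y)⁻¹ C.o

variable {C}

lemma neg_not_rel_i {y : X} (hy : ¬ C.r.r y C.i) : ¬ C.r.r (C.neg y) C.i :=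
  C.preMoufang.not_rel_apply (inv_mem (C.α_mem y hy)) C.o_not_rel_i

lemma α_apply_neg (y : X) : C.α y (C.neg y) = C.o :=
  (C.α y).apply_symm_apply C.o

lemma α_neg {y : X} (hy : ¬ C.r.r y C.i) : C.α (C.neg y) = (C.α y)⁻¹ :=
  (C.eq_α (neg_not_rel_i hy) (inv_mem (C.α_mem y hy)) rfl).symm

lemma neg_neg {y : X} (hy : ¬ C.r.r y C.i) : C.neg (C.neg y) = y := by
  rw [neg, α_neg hy, inv_inv, C.α_apply_o y hy]

lemma IsUnitPoint.neg {y : X} (hy : C.IsUnitPoint y) : C.IsUnitPoint (C.neg y) := by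
  refine ⟨fun h => hy.1 (C.r.iseqv.symm ?_), neg_not_rel_i hy.2⟩
  simpa [α_apply_neg, C.α_apply_o y hy.2] using
    (C.preMoufang.preserves C.i _ (C.α_mem y hy.2) _ _).mp h

lemma τ_inv_o : C.τ⁻¹ C.o = C.i := by rw [Perm.inv_eq_iff_eq, C.τ_i]

lemma τ_inv_i : C.τ⁻¹ C.i = C.o := by rw [Perm.inv_eq_iff_eq, C.τ_o]

lemma IsUnitPoint.τ {y : X} (hy : C.IsUnitPoint y) : C.IsUnitPoint (C.τ y) :=
  isUnitPoint_apply_of_swap C.τ_mem_iSup C.τ_o C.τ_i hy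

lemma IsUnitPoint.τ_inv {y : X} (hy : C.IsUnitPoint y) : C.IsUnitPoint (C.τ⁻¹ y) :=
  isUnitPoint_apply_of_swap (inv_mem C.τ_mem_iSup) τ_inv_o τ_inv_i hy

lemma τ_inv_not_rel_i {y : X} (hy : ¬ C.r.r y C.o) : ¬ C.r.r (C.τ⁻¹ y) C.i := by
  rwa [← τ_inv_o, ← C.preMoufang.preservesRel_of_mem_iSup (inv_mem C.τ_mem_iSup)]

lemma τ_neg {y : X} (hy : C.IsUnitPoint y) : C.τ (C.neg y) = C.neg (C.τ y) :=
  C.special y hy.1 hy.2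

lemma τ_inv_neg {w : X} (hw : C.IsUnitPoint w) : C.τ⁻¹ (C.neg w) = C.neg (C.τ⁻¹ w) := by
  rw [Perm.inv_eq_iff_eq, τ_neg hw.τ_inv]
  simp only [Perm.coe_inv, Equiv.apply_symm_apply]

variable (C) in
/-- The coordinate in `U 0` sending `∞` to `y`; taking it as the `τ`-conjugate of
`α (τ⁻¹ y)` makes the transport between `U ∞` and `U 0` definitional. -/
def β (y : X) : Perm X := C.τ * C.α (C.τ⁻¹ y) * C.τ⁻¹

lemma β_mem {y : X} (hy : ¬ C.r.r y C.o) : C.β y ∈ C.U C.o := by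
  have := C.isLocalMoufangSet.conj_mem C.τ_mem_iSup (C.α_mem _ (τ_inv_not_rel_i hy))
  rwa [C.τ_i] at this

lemma β_apply_i {y : X} (hy : ¬ C.r.r y C.o) : C.β y C.i = y := by
  simp only [β, Perm.mul_apply, τ_inv_i, C.α_apply_o _ (τ_inv_not_rel_i hy)]
  simp only [Perm.coe_inv, Equiv.apply_symm_apply]

lemma eq_β {y : X} (hy : ¬ C.r.r y C.o) {g : Perm X} (hg : g ∈ C.U C.o) (h : g C.i = y) :
    g = C.β y :=
  C.preMoufang.eq_of_apply_eq hg (β_mem hy) C.i_not_rel_o (by rw [h, β_apply_i hy])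

lemma β_neg {w : X} (hw : C.IsUnitPoint w) : C.β (C.neg w) = (C.β w)⁻¹ := by
  rw [β, β, τ_inv_neg hw, α_neg hw.τ_inv.2]
  group

lemma β_apply_comm {p q : X} (hp : ¬ C.r.r p C.o) (hq : ¬ C.r.r q C.o) :
    C.β p q = C.β q p := by
  simp only [β, Perm.mul_apply]
  rw [α_apply_comm (τ_inv_not_rel_i hp) (τ_inv_not_rel_i hq)]

lemma conj_α_of_swap {g : Perm X} (hg : g ∈ ⨆ y, C.U y) (ho : g C.o = C.i)
    (hi : g C.i = C.o) {p : X} (hp : ¬ C.r.r p C.i) : g * C.α p * g⁻¹ = C.β (g p) := by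
  refine eq_β ?_ ?_ ?_
  · rwa [← hi, ← C.preMoufang.preservesRel_of_mem_iSup hg]
  · simpa [hi] using C.isLocalMoufangSet.conj_mem hg (C.α_mem p hp)
  · have : g⁻¹ C.i = C.o := by rw [Perm.inv_eq_iff_eq, ho]
    rw [Perm.mul_apply, Perm.mul_apply, this, C.α_apply_o p hp]

lemma conj_β_of_swap {g : Perm X} (hg : g ∈ ⨆ y, C.U y) (ho : g C.o = C.i)
    (hi : g C.i = C.o) {q : X} (hq : ¬ C.r.r q C.o) : g * C.β q * g⁻¹ = C.α (g q) := by
  refine eq_α ?_ ?_ ?_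
  · rwa [← ho, ← C.preMoufang.preservesRel_of_mem_iSup hg]
  · simpa [ho] using C.isLocalMoufangSet.conj_mem hg (β_mem hq)
  · have : g⁻¹ C.o = C.i := by rw [Perm.inv_eq_iff_eq, hi]
    rw [Perm.mul_apply, Perm.mul_apply, this, β_apply_i hq]

variable (C) in
/-- The μ-map of a unit `z`: it lies in `U 0 · α z · U 0` and swaps `0` and `∞`
(`μ_o`, `μ_i`); the latter needs speciality (`β_inv_apply_i`). -/
def μ (z : X) : Perm X := (C.β z)⁻¹ * C.α z * (C.β z)⁻¹

lemma β_inv_apply_o {z : X} (hz : ¬ C.r.r z C.o) : (C.β z)⁻¹ C.o = C.o :=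
  C.preMoufang.fixes C.o _ (inv_mem (β_mem hz))

lemma β_inv_apply_self {z : X} (hz : ¬ C.r.r z C.o) : (C.β z)⁻¹ z = C.i := by
  rw [Perm.inv_eq_iff_eq, β_apply_i hz]

lemma β_inv_apply_i {z : X} (hz : C.IsUnitPoint z) : (C.β z)⁻¹ C.i = C.neg z := by
  rw [← β_neg hz, β_apply_i hz.neg.1]

lemma μ_o {z : X} (hz : C.IsUnitPoint z) : C.μ z C.o = C.i := by
  simp only [μ, Perm.mul_apply, β_inv_apply_o hz.1, C.α_apply_o z hz.2, β_inv_apply_self hz.1]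

lemma μ_i {z : X} (hz : C.IsUnitPoint z) : C.μ z C.i = C.o := by
  simp only [μ, Perm.mul_apply, β_inv_apply_i hz, α_apply_neg, β_inv_apply_o hz.1]

lemma μ_self {z : X} (hz : C.IsUnitPoint z) : C.μ z z = C.neg z := by
  simp only [μ, Perm.mul_apply, β_inv_apply_self hz.1, C.preMoufang.fixes C.i _ (C.α_mem z hz.2),
    β_inv_apply_i hz]

lemma μ_mem_iSup {z : X} (hz : C.IsUnitPoint z) : C.μ z ∈ ⨆ y, C.U y := by
  have hβ : (C.β z)⁻¹ ∈ ⨆ y, C.U y := le_iSup C.U C.o (inv_mem (β_mem hz.1))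
  exact mul_mem (mul_mem hβ (le_iSup C.U C.i (C.α_mem z hz.2))) hβ

lemma μ_inv {z : X} (hz : C.IsUnitPoint z) : (C.μ z)⁻¹ = C.μ (C.neg z) := by
  rw [μ, μ, β_neg hz, α_neg hz.2]
  group

lemma IsUnitPoint.μ {z p : X} (hz : C.IsUnitPoint z) (hp : C.IsUnitPoint p) :
    C.IsUnitPoint (C.μ z p) :=
  isUnitPoint_apply_of_swap (μ_mem_iSup hz) (μ_o hz) (μ_i hz) hp

lemma conj_α_μ {z p : X} (hz : C.IsUnitPoint z) (hp : ¬ C.r.r p C.i) :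
    C.μ z * C.α p * (C.μ z)⁻¹ = C.β (C.μ z p) :=
  conj_α_of_swap (μ_mem_iSup hz) (μ_o hz) (μ_i hz) hp

lemma conj_β_μ {z q : X} (hz : C.IsUnitPoint z) (hq : ¬ C.r.r q C.o) :
    C.μ z * C.β q * (C.μ z)⁻¹ = C.α (C.μ z q) :=
  conj_β_of_swap (μ_mem_iSup hz) (μ_o hz) (μ_i hz) hq

lemma μ_neg {z p : X} (hz : C.IsUnitPoint z) (hp : C.IsUnitPoint p) :
    C.μ z (C.neg p) = C.neg (C.μ z p) := by
  have h := Perm.conj_zpow_apply (C.μ z) (C.α p) (-1) C.o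
  rw [zpow_neg_one, zpow_neg_one, conj_α_μ hz hp.2, μ_o hz] at h
  rw [neg, ← h, β_inv_apply_i (hz.μ hp)]

lemma β_eq_α_mul_μ_inv_mul_α {z : X} (hz : C.IsUnitPoint z) :
    C.β z = C.α z * (C.μ z)⁻¹ * C.α z := by
  set m := C.μ z
  set a := C.α (C.neg z)
  -- `a * β z * a` is carried by conjugation with `μ z` to `β z * a * β z = μ (-z) = m⁻¹`.
  have hconj : m * (a * C.β z * a) * m⁻¹ = m⁻¹ := by
    have e : m * (a * C.β z * a) * m⁻¹ =
        (m * a * m⁻¹) * (m * C.β z * m⁻¹) * (m * a * m⁻¹) := by group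
    rw [e, conj_α_μ hz hz.neg.2, conj_β_μ hz hz.1, μ_neg hz hz, μ_self hz, neg_neg hz.2,
      μ_inv hz, μ, β_neg hz, inv_inv]
  have ha : a = (C.α z)⁻¹ := α_neg hz.2
  calc C.β z = (C.α z) * (a * C.β z * a) * C.α z := by rw [ha]; group
    _ = C.α z * (m⁻¹ * (m * (a * C.β z * a) * m⁻¹) * m) * C.α z := by group
    _ = C.α z * m⁻¹ * C.α z := by rw [hconj]; group

lemma α_apply_μ_inv_apply_comm {p q : X} (hp : C.IsUnitPoint p) (hq : C.IsUnitPoint q) :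
    C.α p ((C.μ p)⁻¹ (C.α p q)) = C.α q ((C.μ q)⁻¹ (C.α p q)) := by
  have h := β_apply_comm hp.1 hq.1
  rw [β_eq_α_mul_μ_inv_mul_α hp, β_eq_α_mul_μ_inv_mul_α hq] at h
  simp only [Perm.mul_apply] at h
  rwa [α_apply_comm hq.2 hp.2] at h

variable (C) in
/-- `αMul m y` is the paper's `y · m`; `βMul` is its analogue in `U 0`. -/
def αMul (m : ℤ) (y : X) : X := (C.α y ^ m) C.o

variable (C) in
def βMul (m : ℤ) (y : X) : X := (C.β y ^ m) C.i

lemma αMul_not_rel_i {y : X} (hy : ¬ C.r.r y C.i) (m : ℤ) : ¬ C.r.r (C.αMul m y) C.i :=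
  C.preMoufang.not_rel_apply (zpow_mem (C.α_mem y hy) m) C.o_not_rel_i

lemma α_αMul {y : X} (hy : ¬ C.r.r y C.i) (m : ℤ) : C.α (C.αMul m y) = C.α y ^ m :=
  (eq_α (αMul_not_rel_i hy m) (zpow_mem (C.α_mem y hy) m) rfl).symm

lemma αMul_natCast (k : ℕ) (y : X) : C.αMul k y = (C.α y ^ k) C.o := by
  rw [αMul, zpow_natCast]

lemma αMul_one {y : X} (hy : ¬ C.r.r y C.i) : C.αMul 1 y = y := by
  rw [αMul, zpow_one, C.α_apply_o y hy]

lemma βMul_one {y : X} (hy : ¬ C.r.r y C.o) : C.βMul 1 y = y := by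
  rw [βMul, zpow_one, β_apply_i hy]

lemma αMul_αMul {y : X} (hy : ¬ C.r.r y C.i) (a b : ℤ) :
    C.αMul b (C.αMul a y) = C.αMul (a * b) y := by
  rw [αMul, α_αMul hy, ← zpow_mul]
  rfl

lemma zpow_α_apply_self {y : X} (hy : ¬ C.r.r y C.i) (a : ℤ) :
    (C.α y ^ a) y = C.αMul (a + 1) y := by
  calc (C.α y ^ a) y = (C.α y ^ a) (C.α y C.o) := by rw [C.α_apply_o y hy]
    _ = C.αMul (a + 1) y := by rw [← Perm.mul_apply, ← zpow_add_one]; rfl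

lemma αMul_apply {g : Perm X} (hg : g ∈ C.U C.i) {p : X} (hp : ¬ C.r.r p C.i) (m : ℤ) :
    C.αMul m (g p) = (g ^ m) (C.αMul m p) := by
  rw [αMul, α_apply hg hp, (commute_of_mem hg (C.α_mem p hp)).mul_zpow, Perm.mul_apply]
  rfl

lemma αMul_neg {y : X} (hy : ¬ C.r.r y C.i) (m : ℤ) :
    C.αMul m (C.neg y) = C.αMul (-m) y := by
  rw [αMul, α_neg hy, inv_zpow, ← zpow_neg]
  rfl

lemma neg_αMul {y : X} (hy : ¬ C.r.r y C.i) (m : ℤ) :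
    C.neg (C.αMul m y) = C.αMul (-m) y := by
  rw [neg, α_αMul hy, ← zpow_neg]
  rfl

lemma βMul_eq (m : ℤ) (y : X) : C.βMul m y = C.τ (C.αMul m (C.τ⁻¹ y)) := by
  rw [βMul, β, ← C.τ_o, Perm.conj_zpow_apply]
  rfl

lemma βMul_neg {w : X} (hw : C.IsUnitPoint w) (m : ℤ) :
    C.βMul m (C.neg w) = C.βMul (-m) w := by
  rw [βMul, β_neg hw, inv_zpow, ← zpow_neg]
  rfl

lemma μ_apply_αMul {z y : X} (hz : C.IsUnitPoint z) (hy : ¬ C.r.r y C.i) (m : ℤ) :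
    C.μ z (C.αMul m y) = C.βMul m (C.μ z y) := by
  rw [βMul, ← conj_α_μ hz hy, ← μ_o hz, Perm.conj_zpow_apply]
  rfl

lemma μ_apply_βMul {z q : X} (hz : C.IsUnitPoint z) (hq : ¬ C.r.r q C.o) (m : ℤ) :
    C.μ z (C.βMul m q) = C.αMul m (C.μ z q) := by
  rw [αMul, ← conj_β_μ hz hq, ← μ_i hz, Perm.conj_zpow_apply]
  rfl

variable (C) in
def NoTorsion (k : ℕ) : Prop := ∀ v ∈ C.U C.i, v ^ k = 1 → v = 1

lemma αMul_injective {k : ℕ} (hk : C.NoTorsion k) {p q : X} (hp : ¬ C.r.r p C.i)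
    (hq : ¬ C.r.r q C.i) (h : C.αMul k p = C.αMul k q) : p = q := by
  rw [αMul_natCast, αMul_natCast] at h
  have hpow := C.preMoufang.eq_of_apply_eq (pow_mem (C.α_mem p hp) k) (pow_mem (C.α_mem q hq) k)
    C.o_not_rel_i h
  have hα := eq_of_pow_eq_of_noTorsion hk (C.α_mem p hp) (C.α_mem q hq)
    (commute_of_mem (C.α_mem p hp) (C.α_mem q hq)) hpow
  rw [← C.α_apply_o p hp, hα, C.α_apply_o q hq]

lemma βMul_injective {k : ℕ} (hk : C.NoTorsion k) {p q : X} (hp : ¬ C.r.r p C.o)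
    (hq : ¬ C.r.r q C.o) (h : C.βMul k p = C.βMul k q) : p = q := by
  rw [βMul_eq, βMul_eq] at h
  exact C.τ⁻¹.injective
    (αMul_injective hk (τ_inv_not_rel_i hp) (τ_inv_not_rel_i hq) (C.τ.injective h))

lemma IsUnitPoint.βMul {k : ℕ} (hk : MapsTo (C.αMul k) C.unitPoints C.unitPoints) {y : X}
    (hy : C.IsUnitPoint y) : C.IsUnitPoint (C.βMul k y) := by
  rw [βMul_eq]
  exact IsUnitPoint.τ (hk hy.τ_inv)

lemma isUnitPoint_apply_of_rel {g : Perm X} (hg : g ∈ C.U C.i) (hgo : C.r.r (g C.o) C.o)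
    {x : X} (hx : C.IsUnitPoint x) : C.IsUnitPoint (g x) := by
  have hfix := C.preMoufang.rel_apply_of_rel_apply hg C.o_not_rel_i hgo x
  exact ⟨fun h => hx.1 (C.r.iseqv.trans (C.r.iseqv.symm hfix) h),
    fun h => hx.2 (C.r.iseqv.trans (C.r.iseqv.symm hfix) h)⟩

section Induction

variable {k : ℕ}

/-- Read the identity `α_apply_μ_inv_apply_comm` at `(-w, y)` with `w = y · (k + 1)`: both sides
become `k`-th multiples in `U 0`, which the hypotheses at level `k` let us compare. -/
lemma μ_αMul_apply_self (htor : C.NoTorsion k)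
    (hinv : LeftInvOn (C.αMul k) (C.βMul k) C.unitPoints)
    (hk : MapsTo (C.αMul k) C.unitPoints C.unitPoints)
    (hk1 : MapsTo (C.αMul ↑(k + 1)) C.unitPoints C.unitPoints)
    {y : X} (hy : C.IsUnitPoint y) :
    C.μ (C.αMul ↑(k + 1) y) y = C.αMul (-(↑(k + 1) * ↑(k + 1))) y := by
  set K : ℤ := ↑(k + 1) with hK
  set A := C.α y
  set w := C.αMul K y
  set D := C.βMul k y
  have hw : C.IsUnitPoint w := hk1 hy
  have hD : C.IsUnitPoint D := hy.βMul hk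
  have hαw : C.α w = A ^ K := α_αMul hy.2 K
  have hP : C.μ w (C.αMul (-k) y) = (A ^ (K + 1)) D := by
    have h := α_apply_μ_inv_apply_comm hw.neg hy
    have hneg_w_y : C.α (C.neg w) y = C.αMul (-k) y := by
      rw [α_neg hw.2, hαw, ← zpow_neg, zpow_α_apply_self hy.2]
      congr 1
      omega
    have hμy : (C.μ y)⁻¹ (C.αMul (-k) y) = D := by
      rw [μ_inv hy, ← αMul_neg hy.2, μ_apply_αMul hy.neg hy.neg.2, μ_self hy.neg,
        neg_neg hy.2]
    rw [hneg_w_y, μ_inv hw.neg, neg_neg hw.2, hμy, α_neg hw.2, hαw, Perm.inv_eq_iff_eq] at h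
    rw [h, ← Perm.mul_apply, ← zpow_add_one]
  set M := C.αMul (K * K) y
  have hMu : C.IsUnitPoint M := by
    have := hk1 (hk1 hy)
    rwa [αMul_αMul hy.2] at this
  have hβM : C.βMul k M = (A ^ (K + 1)) D := by
    refine αMul_injective htor (hMu.βMul hk).2
      (C.preMoufang.not_rel_apply (zpow_mem (C.α_mem y hy.2) _) hD.2) ?_
    rw [hinv hMu, αMul_apply (zpow_mem (C.α_mem y hy.2) _) hD.2, hinv hy, ← zpow_mul,
      zpow_α_apply_self hy.2]
    show C.αMul (K * K) y = _
    congr 1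
    push_cast [hK]
    ring
  have hβμ : C.βMul k (C.neg (C.μ w y)) = (A ^ (K + 1)) D := by
    rw [βMul_neg (hw.μ hy), ← μ_apply_αMul hw hy.2, hP]
  have hneg : C.neg (C.μ w y) = M :=
    βMul_injective htor (hw.μ hy).neg.1 hMu.1 (hβμ.trans hβM.symm)
  rw [← neg_neg (hw.μ hy).2, hneg, neg_αMul hy.2]

lemma leftInvOn_βMul_αMul_succ (htor : C.NoTorsion k)
    (hinv : LeftInvOn (C.αMul k) (C.βMul k) C.unitPoints)
    (hk : MapsTo (C.αMul k) C.unitPoints C.unitPoints)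
    (hk1 : MapsTo (C.αMul ↑(k + 1)) C.unitPoints C.unitPoints) :
    LeftInvOn (C.βMul ↑(k + 1)) (C.αMul ↑(k + 1)) C.unitPoints := by
  intro y hy
  have hw : C.IsUnitPoint (C.αMul ↑(k + 1) y) := hk1 hy
  apply (C.μ (C.αMul ↑(k + 1) y)).injective
  rw [μ_apply_βMul hw hw.1, μ_self hw, αMul_neg hw.2, αMul_αMul hy.2,
    μ_αMul_apply_self htor hinv hk hk1 hy, mul_neg]

lemma noTorsion_of_leftInvOn (hk : MapsTo (C.αMul k) C.unitPoints C.unitPoints)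
    (hinv : LeftInvOn (C.βMul k) (C.αMul k) C.unitPoints) : C.NoTorsion k := by
  intro v hv hvk
  by_cases hvo : C.r.r (v C.o) C.o
  · obtain ⟨x, hx⟩ := C.exists_isUnitPoint
    refine C.preMoufang.eq_of_apply_eq hv (one_mem _) hx.2 ?_
    rw [Perm.one_apply, ← hinv (isUnitPoint_apply_of_rel hv hvo hx), αMul_apply hv hx.2,
      zpow_natCast, hvk, Perm.one_apply, hinv hx]
  · have hvo' : C.IsUnitPoint (v C.o) := ⟨hvo, C.preMoufang.not_rel_apply hv C.o_not_rel_i⟩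
    refine absurd ?_ (hk hvo').1
    rw [αMul_natCast, ← eq_α hvo'.2 hv rfl, hvk, Perm.one_apply]

lemma leftInvOn_αMul_βMul (htor : C.NoTorsion k)
    (hk : MapsTo (C.αMul k) C.unitPoints C.unitPoints)
    (hinv : LeftInvOn (C.βMul k) (C.αMul k) C.unitPoints) :
    LeftInvOn (C.αMul k) (C.βMul k) C.unitPoints := fun _ hy =>
  βMul_injective htor (hk (hy.βMul hk)).1 hy.1 (hinv (hy.βMul hk))

lemma noTorsion_and_leftInvOn {n : ℕ}
    (hn : ∀ k, 1 ≤ k → k ≤ n → MapsTo (C.αMul k) C.unitPoints C.unitPoints)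
    (hk1 : 1 ≤ k) (hkn : k ≤ n) :
    C.NoTorsion k ∧ LeftInvOn (C.αMul k) (C.βMul k) C.unitPoints := by
  induction k, hk1 using Nat.le_induction with
  | base =>
    refine ⟨fun v _ h => by rwa [pow_one] at h, fun y hy => ?_⟩
    simp only [Nat.cast_one, βMul_one hy.1, αMul_one hy.2]
  | succ k hk ih =>
    obtain ⟨htor, hinv⟩ := ih (by omega)
    have hkmaps := hn k hk (by omega)
    have hk1maps := hn (k + 1) (by omega) hkn
    have hinv' := leftInvOn_βMul_αMul_succ htor hinv hkmaps hk1maps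
    have htor' := noTorsion_of_leftInvOn hk1maps hinv'
    exact ⟨htor', leftInvOn_αMul_βMul htor' hk1maps hinv'⟩

end Induction

lemma exists_pow_eq {k : ℕ} (hk : MapsTo (C.αMul k) C.unitPoints C.unitPoints)
    (hinv : LeftInvOn (C.αMul k) (C.βMul k) C.unitPoints) {u : Perm X}
    (hu : u ∈ C.U C.i) : ∃ v ∈ C.U C.i, v ^ k = u := by
  have hroot : ∀ p, C.IsUnitPoint p → C.α (C.βMul k p) ^ k = C.α p := fun p hp =>
    eq_α hp.2 (pow_mem (C.α_mem _ (hp.βMul hk).2) k) (by rw [← αMul_natCast]; exact hinv hp)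
  by_cases huo : C.r.r (u C.o) C.o
  · obtain ⟨x, hx⟩ := C.exists_isUnitPoint
    have hux := isUnitPoint_apply_of_rel hu huo hx
    have h₁ := C.α_mem _ (hux.βMul hk).2
    have h₂ := C.α_mem _ (hx.βMul hk).2
    refine ⟨C.α (C.βMul k (u x)) * (C.α (C.βMul k x))⁻¹, mul_mem h₁ (inv_mem h₂), ?_⟩
    rw [(commute_of_mem h₁ h₂).inv_right.mul_pow, inv_pow, hroot _ hux, hroot _ hx,
      α_apply hu hx.2, mul_inv_cancel_right]
  · have huo' : C.IsUnitPoint (u C.o) := ⟨huo, C.preMoufang.not_rel_apply hu C.o_not_rel_i⟩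
    exact ⟨_, C.α_mem _ (huo'.βMul hk).2, by rw [hroot _ huo', ← eq_α huo'.2 hu rfl]⟩

lemma existsUnique_pow_eq {k : ℕ} (htor : C.NoTorsion k)
    (hk : MapsTo (C.αMul k) C.unitPoints C.unitPoints)
    (hinv : LeftInvOn (C.αMul k) (C.βMul k) C.unitPoints) {u : Perm X}
    (hu : u ∈ C.U C.i) : ∃! v, v ∈ C.U C.i ∧ v ^ k = u := by
  obtain ⟨v, hv, hvk⟩ := exists_pow_eq hk hinv hu
  exact ⟨v, ⟨hv, hvk⟩, fun v' ⟨hv', hv'k⟩ =>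
    eq_of_pow_eq_of_noTorsion htor hv' hv (commute_of_mem hv' hv) (hv'k.trans hvk.symm)⟩

end SpecialFrame_s12

open SpecialFrame_s12 in
theorem statement12_general (r : Setoid X) (U : X → Subgroup (Equiv.Perm X))
    (hM : IsLocalMoufangSet r U) (o i : X) (hoi : ¬ r.r o i)
    (α : X → Equiv.Perm X) (hα : ∀ y : X, ¬ r.r y i → α y ∈ U i ∧ α y o = y)
    (τ : Equiv.Perm X) (e : X)
    (hτ : IsMuMap U o i e τ)
    (hspecial : ∀ y : X, ¬ r.r y o → ¬ r.r y i → τ ((α y)⁻¹ o) = (α (τ y))⁻¹ o)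
    (habel : ∀ a ∈ U i, ∀ b ∈ U i, a * b = b * a)
    (n : ℕ)
    (hdiv : ∀ x : X, ¬ r.r x o → ¬ r.r x i → ∀ k : ℕ, 1 ≤ k → k ≤ n →
      ¬ r.r ((α x ^ k) o) o ∧ ¬ r.r ((α x ^ k) o) i) :
    ∀ k : ℕ, 1 ≤ k → k ≤ n → ∀ u ∈ U i,
      ∃! v : Equiv.Perm X, v ∈ U i ∧ v ^ k = u := by
  obtain ⟨a, ha, -, ⟨u₀, hu₀, v₀, hv₀, rfl⟩, hτo, hτi⟩ := hτ
  have hτ : u₀ * a * v₀ ∈ ⨆ y, U y :=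
    mul_mem (mul_mem (le_iSup U o hu₀) (le_iSup U i ha)) (le_iSup U o hv₀)
  let C : SpecialFrame_s12 X := ⟨r, U, hM, o, i, hoi, α, fun y hy => (hα y hy).1,
    fun y hy => (hα y hy).2, _, hτ, hτo, hτi, hspecial, habel⟩
  have hn : ∀ k, 1 ≤ k → k ≤ n → MapsTo (C.αMul k) C.unitPoints C.unitPoints :=
    fun k hk1 hkn y hy => show C.IsUnitPoint (C.αMul k y) by
      rw [αMul_natCast]
      exact hdiv y hy.1 hy.2 k hk1 hkn
  intro k hk1 hkn u hu
  obtain ⟨htor, hinv⟩ := C.noTorsion_and_leftInvOn hn hk1 hkn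
  exact C.existsUnique_pow_eq htor (hn k hk1 hkn) hinv hu

/-- if `M` is a special local Moufang set with `U ∞` abelian and
`x · k` is a unit for every unit `x` and every `1 ≤ k ≤ n`, then `U ∞` is uniquely
`k`-divisible for all `1 ≤ k ≤ n`.  Notation as in the paper: `(o, i) = (0, ∞)`,
`α y ∈ U ∞` is the unique element with `0 · α_y = y`, `x · k := 0 · α_x ^ k`,
and `M` special means `(-y)τ = -(yτ)` for units `y` and a μ-map `τ`. -/
theorem statement12 (r : Setoid X) (U : X → Subgroup (Equiv.Perm X))
    (hM : IsLocalMoufangSet r U) (o i : X) (hoi : ¬ r.r o i)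
    (α : X → Equiv.Perm X) (hα : ∀ y : X, ¬ r.r y i → α y ∈ U i ∧ α y o = y)
    (τ : Equiv.Perm X) (e : X) (heo : ¬ r.r e o) (hei : ¬ r.r e i)
    (hτ : IsMuMap U o i e τ)
    (hspecial : ∀ y : X, ¬ r.r y o → ¬ r.r y i → τ ((α y)⁻¹ o) = (α (τ y))⁻¹ o)
    (habel : ∀ a ∈ U i, ∀ b ∈ U i, a * b = b * a)
    (n : ℕ)
    (hdiv : ∀ x : X, ¬ r.r x o → ¬ r.r x i → ∀ k : ℕ, 1 ≤ k → k ≤ n →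
      ¬ r.r ((α x ^ k) o) o ∧ ¬ r.r ((α x ^ k) o) i) :
    ∀ k : ℕ, 1 ≤ k → k ≤ n → ∀ u ∈ U i,
      ∃! v : Equiv.Perm X, v ∈ U i ∧ v ^ k = u :=
  statement12_general r U hM o i hoi α hα τ e hτ hspecial habel n hdiv
end

section
/- Let (R,m) be a local ring. Then P¹(R̂) ≅ lim← P¹(R/mⁱ), the inverse limit being taken over the natural projections R/mⁱ → R/mʲ for i ≥ j, where R̂ = lim← R/mⁱ is the completion. -/
/-!
Over a local ring every point of `P¹` lies in one of the affine charts `[1 : t]`, `[t : 1]`, and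
the chart is already visible modulo the maximal ideal: a thread of `R̂` whose first component is
a unit is a unit, and the projections `R/mⁱ → R/m` reflect units. So a point of `P¹(R̂)`, and
likewise a compatible family of points of the `P¹(R/mⁱ)`, lives in a single chart, where the
projective lines are just the rings themselves and the claim reduces to `R̂ = lim← R/mⁱ`.
-/

/-- The carrier of the projective line over `R`: pairs generating the unit ideal. -/
def ProjCarrier (R : Type*) [CommRing R] : Type _ :=
  {p : R × R // Ideal.span {p.1, p.2} = ⊤}

/-- Unit rescaling on `ProjCarrier R`. -/
def projSetoid (R : Type*) [CommRing R] : Setoid (ProjCarrier R) where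
  r p q := ∃ u : Rˣ, q.1.1 = u * p.1.1 ∧ q.1.2 = u * p.1.2
  iseqv := by
    refine ⟨fun p => ⟨1, by simp, by simp⟩, ?_, ?_⟩
    · rintro p q ⟨u, h1, h2⟩
      exact ⟨u⁻¹, by rw [h1, ← mul_assoc, Units.inv_mul, one_mul],
        by rw [h2, ← mul_assoc, Units.inv_mul, one_mul]⟩
    · rintro p q s ⟨u, h1, h2⟩ ⟨w, h3, h4⟩
      exact ⟨w * u, by rw [h3, h1, Units.val_mul, mul_assoc],
        by rw [h4, h2, Units.val_mul, mul_assoc]⟩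

/-- The projective line `P¹(R) = {[a, b] : aR + bR = R}` over a commutative ring. -/
def ProjLine (R : Type*) [CommRing R] : Type _ :=
  Quotient (projSetoid R)

/-- Functoriality of the projective line: `P¹(f)([a,b]) = [f a, f b]`. -/
def ProjLine.map {R S : Type*} [CommRing R] [CommRing S] (f : R →+* S) :
    ProjLine R → ProjLine S :=
  Quotient.map
    (fun p => ⟨(f p.1.1, f p.1.2), by
      obtain ⟨u, v, huv⟩ := (Ideal.mem_span_pair).1
        (p.2 ▸ Submodule.mem_top (x := (1 : R)))
      rw [Ideal.eq_top_iff_one, Ideal.mem_span_pair]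
      exact ⟨f u, f v, by rw [← map_mul, ← map_mul, ← map_add, huv, map_one]⟩⟩)
    (by
      rintro p q ⟨u, h1, h2⟩
      exact ⟨Units.map (f : R →* S) u, by simp [h1, h2]⟩)

/-- The completion `R̂ = lim← R/mⁱ` of `R` at an ideal `m`, realized as the subring of
compatible threads in `Π i, R ⧸ m ^ i`. -/
def adicInvLim (R : Type*) [CommRing R] (m : Ideal R) :
    Subring (∀ i : ℕ, R ⧸ m ^ i) where
  carrier := {x | ∀ (i j : ℕ) (h : j ≤ i),
    Ideal.Quotient.factor (Ideal.pow_le_pow_right h) (x i) = x j}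
  mul_mem' hx hy i j h := by
    simp only [Pi.mul_apply, map_mul, hx i j h, hy i j h]
  one_mem' i j h := by simp only [Pi.one_apply, map_one]
  add_mem' hx hy i j h := by
    simp only [Pi.add_apply, map_add, hx i j h, hy i j h]
  zero_mem' i j h := by simp only [Pi.zero_apply, map_zero]
  neg_mem' hx i j h := by simp only [Pi.neg_apply, map_neg, hx i j h]

theorem Ideal.span_pair_eq_top_of_isUnit_left {A : Type*} [CommRing A] {a : A} (b : A)
    (ha : IsUnit a) : Ideal.span {a, b} = ⊤ :=
  Ideal.eq_top_of_isUnit_mem _ (Ideal.subset_span (Set.mem_insert a _)) ha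

theorem Ideal.span_pair_eq_top_of_isUnit_right {A : Type*} [CommRing A] (a : A) {b : A}
    (hb : IsUnit b) : Ideal.span {a, b} = ⊤ :=
  Ideal.eq_top_of_isUnit_mem _ (Ideal.subset_span (Set.mem_insert_of_mem a rfl)) hb

theorem IsLocalRing.isUnit_or_isUnit_of_span_pair_eq_top {A : Type*} [CommRing A]
    [IsLocalRing A] {a b : A} (h : Ideal.span {a, b} = ⊤) : IsUnit a ∨ IsUnit b := by
  obtain ⟨u, v, huv⟩ := Ideal.mem_span_pair.mp (h ▸ Submodule.mem_top (x := (1 : A)))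
  refine (IsLocalRing.isUnit_or_isUnit_of_isUnit_add (huv ▸ isUnit_one)).imp ?_ ?_ <;>
    exact isUnit_of_mul_isUnit_right

instance Ideal.Quotient.subsingleton_pow_zero {R : Type*} [CommRing R] (I : Ideal R) :
    Subsingleton (R ⧸ I ^ 0) :=
  Ideal.Quotient.subsingleton_iff.mpr (by rw [pow_zero, Ideal.one_eq_top])

theorem Ideal.Quotient.isLocalHom_factor {R : Type*} [CommRing R] {I J : Ideal R} (h : I ≤ J)
    (hJ : J ≤ Ideal.jacobson ⊥) : IsLocalHom (Ideal.Quotient.factor h) := by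
  have := isLocalHom_of_le_jacobson_bot J hJ
  refine ⟨fun y hy => ?_⟩
  obtain ⟨r, rfl⟩ := Ideal.Quotient.mk_surjective y
  rw [Ideal.Quotient.factor_mk] at hy
  exact (isUnit_of_map_unit (Ideal.Quotient.mk J) r hy).map _

namespace ProjLine

variable {A B C : Type*} [CommRing A] [CommRing B] [CommRing C]

theorem map_map (f : A →+* B) (g : B →+* C) (q : ProjLine A) :
    map g (map f q) = map (g.comp f) q := by
  induction q using Quotient.ind
  rfl

def chart : Bool → A → ProjLine A
  | false, t =>
    Quotient.mk (projSetoid A) ⟨(1, t), Ideal.span_pair_eq_top_of_isUnit_left t isUnit_one⟩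
  | true, t =>
    Quotient.mk (projSetoid A) ⟨(t, 1), Ideal.span_pair_eq_top_of_isUnit_right t isUnit_one⟩

theorem chart_injective (σ : Bool) : Function.Injective (chart (A := A) σ) := by
  intro s t h
  cases σ
  · obtain ⟨u, h1, h2⟩ := Quotient.exact h
    have hu : (u : A) = 1 := by simpa using h1.symm
    simpa [hu] using h2.symm
  · obtain ⟨u, h1, h2⟩ := Quotient.exact h
    have hu : (u : A) = 1 := by simpa using h2.symm
    simpa [hu] using h1.symm

theorem map_chart (f : A →+* B) (σ : Bool) (t : A) : map f (chart σ t) = chart σ (f t) := by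
  cases σ <;> exact Quotient.sound ⟨1, by simp, by simp⟩

theorem mk_mem_range_chart_false_iff (p : ProjCarrier A) :
    Quotient.mk (projSetoid A) p ∈ Set.range (chart false) ↔ IsUnit p.1.1 := by
  constructor
  · rintro ⟨t, ht⟩
    obtain ⟨u, h1, -⟩ := Quotient.exact ht
    rw [h1, mul_one]
    exact u.isUnit
  · intro ha
    refine ⟨ha.unit⁻¹ * p.1.2, Quotient.sound ⟨ha.unit, ?_, ?_⟩⟩
    · simp
    · simp [← mul_assoc]

theorem mk_mem_range_chart_true_iff (p : ProjCarrier A) :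
    Quotient.mk (projSetoid A) p ∈ Set.range (chart true) ↔ IsUnit p.1.2 := by
  constructor
  · rintro ⟨t, ht⟩
    obtain ⟨u, -, h2⟩ := Quotient.exact ht
    rw [h2, mul_one]
    exact u.isUnit
  · intro hb
    refine ⟨hb.unit⁻¹ * p.1.1, Quotient.sound ⟨hb.unit, ?_, ?_⟩⟩
    · simp [← mul_assoc]
    · simp

theorem exists_mem_range_chart [IsLocalRing A] (q : ProjLine A) :
    ∃ σ, q ∈ Set.range (chart σ) := by
  induction q using Quotient.ind with | _ p
  rcases IsLocalRing.isUnit_or_isUnit_of_span_pair_eq_top p.2 with ha | hb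
  · exact ⟨false, (mk_mem_range_chart_false_iff p).mpr ha⟩
  · exact ⟨true, (mk_mem_range_chart_true_iff p).mpr hb⟩

theorem mem_range_chart_of_subsingleton [Subsingleton A] (σ : Bool) (q : ProjLine A) :
    q ∈ Set.range (chart σ) := by
  induction q using Quotient.ind with | _ p
  cases σ
  · exact (mk_mem_range_chart_false_iff p).mpr (isUnit_of_subsingleton _)
  · exact (mk_mem_range_chart_true_iff p).mpr (isUnit_of_subsingleton _)

theorem mem_range_chart_of_map (f : A →+* B) [IsLocalHom f] {σ : Bool} {q : ProjLine A}
    (h : map f q ∈ Set.range (chart σ)) : q ∈ Set.range (chart σ) := by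
  induction q using Quotient.ind with | _ p
  cases σ
  · exact (mk_mem_range_chart_false_iff p).mpr
      (isUnit_of_map_unit f _ ((mk_mem_range_chart_false_iff _).mp h))
  · exact (mk_mem_range_chart_true_iff p).mpr
      (isUnit_of_map_unit f _ ((mk_mem_range_chart_true_iff _).mp h))

end ProjLine

namespace adicInvLim

variable {R : Type*} [CommRing R] (I : Ideal R)

def proj (j : ℕ) : adicInvLim R I →+* R ⧸ I ^ j :=
  (Pi.evalRingHom (fun k : ℕ => R ⧸ I ^ k) j).comp (adicInvLim R I).subtype

theorem factor_proj {i j : ℕ} (h : j ≤ i) (x : adicInvLim R I) :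
    Ideal.Quotient.factor (Ideal.pow_le_pow_right h) (proj I i x) = proj I j x :=
  x.2 i j h

theorem factor_comp_proj {i j : ℕ} (h : j ≤ i) :
    (Ideal.Quotient.factor (Ideal.pow_le_pow_right h)).comp (proj I i) = proj I j :=
  RingHom.ext (factor_proj I h)

variable {I}

theorem ext_proj {x y : adicInvLim R I} (h : ∀ j, proj I j x = proj I j y) : x = y :=
  Subtype.ext (funext h)

theorem isUnit_of_forall_isUnit_proj {x : adicInvLim R I} (hx : ∀ j, IsUnit (proj I j x)) :
    IsUnit x := by
  let y : ∀ j, R ⧸ I ^ j := fun j => ↑(hx j).unit⁻¹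
  have hy : y ∈ adicInvLim R I := by
    intro i j h
    refine (Units.inv_eq_of_mul_eq_one_left ?_).symm
    rw [IsUnit.unit_spec, ← factor_proj I h, ← map_mul]
    exact (congrArg _ (hx i).val_inv_mul).trans (map_one _)
  exact IsUnit.of_mul_eq_one ⟨y, hy⟩ (ext_proj fun j => (hx j).mul_val_inv)

variable [IsLocalRing R] (hI : I ≠ ⊤)
include hI

theorem isLocalRing_quotient_pow_one : IsLocalRing (R ⧸ I ^ 1) :=
  have : Nontrivial (R ⧸ I ^ 1) := Ideal.Quotient.nontrivial_iff.mpr (by rwa [pow_one])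
  .of_surjective' _ Ideal.Quotient.mk_surjective

theorem isLocalHom_factor_pow_one {j : ℕ} (hj : 1 ≤ j) :
    IsLocalHom (Ideal.Quotient.factor (Ideal.pow_le_pow_right (I := I) hj)) :=
  Ideal.Quotient.isLocalHom_factor _ <| by
    rw [pow_one, IsLocalRing.jacobson_eq_maximalIdeal ⊥ bot_ne_top]
    exact IsLocalRing.le_maximalIdeal hI

theorem isLocalHom_proj_one : IsLocalHom (proj I 1) := by
  refine ⟨fun x hx => isUnit_of_forall_isUnit_proj fun j => ?_⟩
  rcases Nat.eq_zero_or_pos j with rfl | hj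
  · exact isUnit_of_subsingleton _
  · have := isLocalHom_factor_pow_one hI hj
    rw [← factor_proj I hj] at hx
    exact isUnit_of_map_unit (Ideal.Quotient.factor _) _ hx

end adicInvLim

def ProjLineInvLim (R : Type*) [CommRing R] (I : Ideal R) : Type _ :=
  {x : ∀ j : ℕ, ProjLine (R ⧸ I ^ j) //
    ∀ (i j : ℕ) (h : j ≤ i),
      ProjLine.map (Ideal.Quotient.factor (Ideal.pow_le_pow_right h)) (x i) = x j}

namespace ProjLine

open adicInvLim

variable {R : Type*} [CommRing R] {I : Ideal R}

variable (I) in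
def toInvLim (q : ProjLine (adicInvLim R I)) : ProjLineInvLim R I :=
  ⟨fun j => map (proj I j) q, fun i j h => by rw [map_map, factor_comp_proj I h]⟩

variable [IsLocalRing R] (hI : I ≠ ⊤)
include hI

theorem exists_mem_range_chart_of_adicInvLim (q : ProjLine (adicInvLim R I)) :
    ∃ σ, q ∈ Set.range (chart σ) := by
  have := isLocalRing_quotient_pow_one hI
  have := isLocalHom_proj_one hI
  obtain ⟨σ, hσ⟩ := exists_mem_range_chart (map (proj I 1) q)
  exact ⟨σ, mem_range_chart_of_map (proj I 1) hσ⟩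

theorem toInvLim_injective : Function.Injective (toInvLim (R := R) I) := by
  intro q₁ q₂ h
  have hj : ∀ j, map (proj I j) q₁ = map (proj I j) q₂ :=
    fun j => congrFun (congrArg Subtype.val h) j
  obtain ⟨σ, s, rfl⟩ := exists_mem_range_chart_of_adicInvLim hI q₁
  have := isLocalHom_proj_one hI
  obtain ⟨t, rfl⟩ : q₂ ∈ Set.range (chart σ) :=
    mem_range_chart_of_map (proj I 1) ⟨proj I 1 s, by rw [← hj, map_chart]⟩
  refine congrArg _ (ext_proj fun j => chart_injective σ ?_)
  rw [← map_chart, ← map_chart, hj]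

theorem toInvLim_surjective : Function.Surjective (toInvLim (R := R) I) := by
  rintro ⟨x, hx⟩
  have := isLocalRing_quotient_pow_one hI
  obtain ⟨σ, hσ⟩ := exists_mem_range_chart (x 1)
  have hchart : ∀ j, x j ∈ Set.range (chart σ) := by
    intro j
    rcases Nat.eq_zero_or_pos j with rfl | hj
    · exact mem_range_chart_of_subsingleton σ _
    · have := isLocalHom_factor_pow_one hI hj
      exact mem_range_chart_of_map _ (hx j 1 hj ▸ hσ)
  choose t ht using hchart
  have ht_mem : t ∈ adicInvLim R I := fun i j h =>
    chart_injective σ (by rw [← map_chart, ht, ht, hx i j h])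
  exact ⟨chart σ ⟨t, ht_mem⟩,
    Subtype.ext (funext fun j => (map_chart _ σ _).trans (ht j))⟩

end ProjLine

/-- for a local ring `(R, m)` with completion `R̂ = lim← R/mⁱ`,
`P¹(R̂) ≅ lim← P¹(R/mⁱ)`: there is a bijection between `P¹(R̂)` and the inverse limit
of the sets `P¹(R/mⁱ)` (along the maps induced by the natural projections
`R/mⁱ → R/mʲ`, `i ≥ j`) whose components are the maps induced by the projections
`R̂ → R/mʲ`. -/
theorem statement14 (R : Type*) [CommRing R] [IsLocalRing R] :
    ∃ e : ProjLine (adicInvLim R (IsLocalRing.maximalIdeal R)) ≃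
        {x : ∀ j : ℕ, ProjLine (R ⧸ (IsLocalRing.maximalIdeal R) ^ j) //
          ∀ (i j : ℕ) (h : j ≤ i),
            ProjLine.map (Ideal.Quotient.factor (Ideal.pow_le_pow_right h)) (x i)
              = x j},
      ∀ (q : ProjLine (adicInvLim R (IsLocalRing.maximalIdeal R))) (j : ℕ),
        (e q).1 j = ProjLine.map
          ((Pi.evalRingHom (fun k : ℕ => R ⧸ (IsLocalRing.maximalIdeal R) ^ k) j).comp
            (adicInvLim R (IsLocalRing.maximalIdeal R)).subtype) q :=
  have hm := (IsLocalRing.maximalIdeal.isMaximal R).ne_top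
  ⟨Equiv.ofBijective (ProjLine.toInvLim _)
    ⟨ProjLine.toInvLim_injective hm, ProjLine.toInvLim_surjective hm⟩, fun _ _ => rfl⟩
end

section
/- Let O be the valuation ring of a field K with discrete valuation, with uniformizer π, and fix a lattice L₀ = e₁O + e₂O in K². If L is a lattice not homothetic to L₀, maximal in its homothety class among lattices contained in L₀, and n = d([L₀],[L]), then L = (ae₁+be₂)O + πⁿL₀ for some a,b ∈ O with at least one of a, b invertible; conversely any lattice of this form with at least one of a,b invertible satisfies d([L₀],[L]) = n and is the unique lattice in its homothety class expressible this way. -/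
/-!
If no vector of `L` had a unit coordinate, then `π⁻¹L ⊆ L₀`; maximality would make `L` stable
under `π⁻¹`, and `πⁿL₀ ⊆ L` would force `L = L₀`. So `L` contains a vector `u` with a unit
coordinate, and `u` extends to an `O`-basis `u, e` of `L₀`. For `p = c u + d e ∈ L` the vector
`d e` lies in `L`, and `v d < n` would give `π^(v d) L₀ ⊆ L`; hence `d ∈ πⁿO` and
`L = Ou + πⁿL₀ = Ou + Oπⁿe`. Conversely, in `Ou + Oπⁿe` the vector `πᵐe` occurs only for `m ≥ n`,
and a homothety between two lattices of this shape is by a unit, because each of them contains a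
vector with a unit coordinate.
-/

variable {K : Type*} [Field K]

/-- The valuation ring `O`. -/
def valRing (v : K → WithTop ℤ) : Set K := {a : K | 0 ≤ v a}

def span2 (v : K → WithTop ℤ) (a b : K × K) : Set (K × K) :=
  {p | ∃ s t : K, s ∈ valRing v ∧ t ∈ valRing v ∧ p = s • a + t • b}

/-- A free rank-2 `O`-submodule of `K²`, encoded as the `O`-span of a `K`-basis. -/
def IsLattice (v : K → WithTop ℤ) (L : Set (K × K)) : Prop :=
  ∃ a b : K × K, LinearIndependent K ![a, b] ∧ L = span2 v a b

def Homothetic (L L' : Set (K × K)) : Prop :=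
  ∃ c : K, c ≠ 0 ∧ (fun p : K × K => c • p) '' L = L'

/-- The standard lattice `L₀ = e₁ O + e₂ O`. -/
def L0 (v : K → WithTop ℤ) : Set (K × K) := span2 v (1, 0) (0, 1)

/-- The lattice `(a e₁ + b e₂) O + πⁿ L₀`. -/
def formLat (v : K → WithTop ℤ) (π : K) (a b : K) (n : ℕ) : Set (K × K) :=
  {p | ∃ s : K, s ∈ valRing v ∧ ∃ q ∈ L0 v, p = s • ((a, b) : K × K) + (π ^ n) • q}

lemma mem_L0_iff (v : K → WithTop ℤ) (p : K × K) :
    p ∈ L0 v ↔ p.1 ∈ valRing v ∧ p.2 ∈ valRing v := by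
  constructor
  · rintro ⟨s, t, hs, ht, rfl⟩
    simpa using ⟨hs, ht⟩
  · rintro ⟨h1, h2⟩
    exact ⟨p.1, p.2, h1, h2, by simp⟩

lemma map_one_eq_zero_of_map_mul {v : K → WithTop ℤ} (hv0 : ∀ a : K, v a = ⊤ ↔ a = 0)
    (hvmul : ∀ a b : K, v (a * b) = v a + v b) : v 1 = 0 := by
  have hne : v 1 ≠ ⊤ := (hv0 1).not.2 one_ne_zero
  refine (WithTop.add_right_inj hne).1 ?_
  rw [← hvmul, one_mul, zero_add]

lemma WithTop.one_le_of_nonneg_of_ne_zero {x : WithTop ℤ} (h0 : 0 ≤ x) (hne : x ≠ 0) :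
    1 ≤ x := by
  induction x using WithTop.recTopCoe with
  | top => exact le_top
  | coe z => norm_cast at *; omega

lemma WithTop.exists_nat_eq_of_nonneg_of_lt {x : WithTop ℤ} {n : ℕ} (h0 : 0 ≤ x)
    (h : x < n) : ∃ m < n, x = m := by
  induction x using WithTop.recTopCoe with
  | top => simp at h
  | coe z =>
    have hz0 : 0 ≤ z := by exact_mod_cast h0
    have hzn : z < n := by exact_mod_cast h
    refine ⟨z.toNat, by omega, ?_⟩
    exact_mod_cast (Int.toNat_of_nonneg hz0).symm

section ValRing

variable {v : AddValuation K (WithTop ℤ)} {a b : K}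

lemma zero_mem_valRing : (0 : K) ∈ valRing v := by simp [valRing]

lemma one_mem_valRing : (1 : K) ∈ valRing v := by simp [valRing]

lemma add_mem_valRing (ha : a ∈ valRing v) (hb : b ∈ valRing v) : a + b ∈ valRing v :=
  (le_min ha hb).trans (v.map_add a b)

lemma sub_mem_valRing (ha : a ∈ valRing v) (hb : b ∈ valRing v) : a - b ∈ valRing v :=
  v.map_le_sub ha hb

lemma mul_mem_valRing (ha : a ∈ valRing v) (hb : b ∈ valRing v) : a * b ∈ valRing v := by
  show 0 ≤ v (a * b)
  rw [v.map_mul]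
  exact add_nonneg ha hb

lemma div_mem_valRing (hb : b ≠ 0) (h : v b ≤ v a) : a / b ∈ valRing v := by
  have hvb : v b ≠ ⊤ := v.ne_top_iff.2 hb
  have : 0 + v b ≤ v (a / b) + v b := by rwa [zero_add, ← v.map_mul, div_mul_cancel₀ a hb]
  exact (WithTop.add_le_add_iff_right hvb).1 this

lemma mem_valRing_of_map_eq_zero_of_mul_mem (hb : v b = 0) (h : a * b ∈ valRing v) :
    a ∈ valRing v := by
  simpa [valRing, v.map_mul, hb] using h

end ValRing

def IsValRingSubmodule (v : K → WithTop ℤ) (L : Set (K × K)) : Prop :=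
  ∀ x ∈ L, ∀ y ∈ L, ∀ s ∈ valRing v, ∀ t ∈ valRing v, s • x + t • y ∈ L

def det2 (u w : K × K) : K := u.1 * w.2 - u.2 * w.1

lemma linearIndependent_of_det2_ne_zero {u w : K × K} (h : det2 u w ≠ 0) :
    LinearIndependent K ![u, w] := by
  unfold det2 at h
  refine LinearIndependent.pair_iff.2 fun s t hst => ?_
  have h1 : s * u.1 + t * w.1 = 0 := congrArg Prod.fst hst
  have h2 : s * u.2 + t * w.2 = 0 := congrArg Prod.snd hst
  constructor
  · refine (mul_eq_zero.1 ?_).resolve_right h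
    linear_combination w.2 * h1 - w.1 * h2
  · refine (mul_eq_zero.1 ?_).resolve_right h
    linear_combination u.1 * h2 - u.2 * h1

section Lattice

variable {v : AddValuation K (WithTop ℤ)} {L : Set (K × K)} {u e : K × K}

lemma IsValRingSubmodule.smul_mem (hL : IsValRingSubmodule v L) {s : K} (hs : s ∈ valRing v)
    {x : K × K} (hx : x ∈ L) : s • x ∈ L := by
  simpa using hL x hx x hx s hs 0 zero_mem_valRing

lemma isValRingSubmodule_span2 (a b : K × K) : IsValRingSubmodule v (span2 v a b) := by
  rintro _ ⟨s₁, t₁, hs₁, ht₁, rfl⟩ _ ⟨s₂, t₂, hs₂, ht₂, rfl⟩ s hs t ht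
  refine ⟨s * s₁ + t * s₂, s * t₁ + t * t₂,
    add_mem_valRing (mul_mem_valRing hs hs₁) (mul_mem_valRing ht hs₂),
    add_mem_valRing (mul_mem_valRing hs ht₁) (mul_mem_valRing ht ht₂), ?_⟩
  module

lemma isValRingSubmodule_L0 : IsValRingSubmodule v (L0 v) := isValRingSubmodule_span2 _ _

lemma right_mem_span2 (a b : K × K) : b ∈ span2 v a b :=
  ⟨0, 1, zero_mem_valRing, one_mem_valRing, by simp⟩

lemma span2_subset (hL : IsValRingSubmodule v L) {a b : K × K} (ha : a ∈ L) (hb : b ∈ L) :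
    span2 v a b ⊆ L := by
  rintro _ ⟨s, t, hs, ht, rfl⟩
  exact hL a ha b hb s hs t ht

lemma det2_mem_valRing (hu : u ∈ L0 v) (he : e ∈ L0 v) : det2 u e ∈ valRing v := by
  rw [mem_L0_iff] at hu he
  exact sub_mem_valRing (mul_mem_valRing hu.1 he.2) (mul_mem_valRing hu.2 he.1)

/-- The denominator in Cramer's rule is the unit `det2 u e`. -/
lemma L0_eq_span2_of_det2 (hu : u ∈ L0 v) (he : e ∈ L0 v) (hdet : v (det2 u e) = 0) :
    L0 v = span2 v u e := by
  refine (span2_subset isValRingSubmodule_L0 hu he).antisymm' fun p hp => ?_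
  have hD : det2 u e ≠ 0 := fun h => by simp [h] at hdet
  refine ⟨det2 p e / det2 u e, det2 u p / det2 u e,
    div_mem_valRing hD (hdet ▸ det2_mem_valRing hp he),
    div_mem_valRing hD (hdet ▸ det2_mem_valRing hu hp), ?_⟩
  ext <;> simp only [Prod.smul_fst, Prod.smul_snd, Prod.fst_add, Prod.snd_add, smul_eq_mul] <;>
    rw [div_mul_eq_mul_div, div_mul_eq_mul_div, ← add_div, eq_div_iff hD] <;>
    (unfold det2; ring)

lemma exists_L0_eq_span2 (hu : u ∈ L0 v) (hunit : v u.1 = 0 ∨ v u.2 = 0) :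
    ∃ e, L0 v = span2 v u e ∧ v (det2 u e) = 0 := by
  rcases hunit with h | h
  · have he : ((0 : K), (1 : K)) ∈ L0 v := (mem_L0_iff _ _).2 ⟨zero_mem_valRing, one_mem_valRing⟩
    have hdet : v (det2 u (0, 1)) = 0 := by simpa [det2] using h
    exact ⟨_, L0_eq_span2_of_det2 hu he hdet, hdet⟩
  · have he : ((-1 : K), (0 : K)) ∈ L0 v := (mem_L0_iff _ _).2 ⟨by simp [valRing], zero_mem_valRing⟩
    have hdet : v (det2 u (-1, 0)) = 0 := by simpa [det2] using h
    exact ⟨_, L0_eq_span2_of_det2 hu he hdet, hdet⟩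

end Lattice

section Uniformizer

variable {v : AddValuation K (WithTop ℤ)} {π : K} {u e : K × K} {a b : K} {n : ℕ}

lemma uniformizer_ne_zero (hπ : v π = 1) : π ≠ 0 := fun h => by simp [h] at hπ

lemma map_pow_uniformizer (hπ : v π = 1) (n : ℕ) : v (π ^ n) = n := by
  rw [v.map_pow, hπ, nsmul_one]

lemma pow_mem_valRing (hπ : v π = 1) (n : ℕ) : π ^ n ∈ valRing v := by
  show 0 ≤ v (π ^ n)
  rw [map_pow_uniformizer hπ]
  exact_mod_cast n.zero_le

lemma mem_formLat_self : ((a, b) : K × K) ∈ formLat v π a b n :=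
  ⟨1, one_mem_valRing, 0, (mem_L0_iff _ _).2 ⟨zero_mem_valRing, zero_mem_valRing⟩, by simp⟩

lemma pow_smul_mem_formLat {q : K × K} (hq : q ∈ L0 v) : π ^ n • q ∈ formLat v π a b n :=
  ⟨0, zero_mem_valRing, q, hq, by simp⟩

lemma smul_mem_formLat {s : K} (hs : s ∈ valRing v) {p : K × K} (hp : p ∈ formLat v π a b n) :
    s • p ∈ formLat v π a b n := by
  obtain ⟨t, ht, q, hq, rfl⟩ := hp
  exact ⟨s * t, mul_mem_valRing hs ht, s • q, isValRingSubmodule_L0.smul_mem hs hq, by module⟩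

lemma formLat_eq_span2 (hπ : v π = 1) (hL0 : L0 v = span2 v u e) (n : ℕ) :
    formLat v π u.1 u.2 n = span2 v u (π ^ n • e) := by
  have hπn := pow_mem_valRing hπ n
  refine subset_antisymm ?_ ?_
  · rintro _ ⟨s, hs, q, hq, rfl⟩
    rw [hL0] at hq
    obtain ⟨c, d, hc, hd, rfl⟩ := hq
    exact ⟨s + π ^ n * c, d, add_mem_valRing hs (mul_mem_valRing hπn hc), hd, by module⟩
  · rintro _ ⟨s, t, hs, ht, rfl⟩
    have he : e ∈ L0 v := hL0 ▸ right_mem_span2 u e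
    exact ⟨s, hs, t • e, isValRingSubmodule_L0.smul_mem ht he, by module⟩

lemma formLat_subset_L0 (hπ : v π = 1) (ha : a ∈ valRing v) (hb : b ∈ valRing v) :
    formLat v π a b n ⊆ L0 v := by
  rintro _ ⟨s, hs, q, hq, rfl⟩
  exact isValRingSubmodule_L0 _ ((mem_L0_iff _ _).2 ⟨ha, hb⟩) _ hq s hs _ (pow_mem_valRing hπ n)

lemma isLattice_formLat (hπ : v π = 1) (hL0 : L0 v = span2 v u e) (hdet : v (det2 u e) = 0)
    (n : ℕ) : IsLattice v (formLat v π u.1 u.2 n) := by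
  have hπ0 := uniformizer_ne_zero hπ
  have hD : det2 u e ≠ 0 := fun h => by simp [h] at hdet
  refine ⟨u, π ^ n • e, linearIndependent_of_det2_ne_zero ?_, formLat_eq_span2 hπ hL0 n⟩
  have : det2 u (π ^ n • e) = π ^ n * det2 u e := by
    simp only [det2, Prod.smul_fst, Prod.smul_snd, smul_eq_mul]; ring
  rw [this]
  exact mul_ne_zero (pow_ne_zero n hπ0) hD

lemma le_of_pow_smul_mem_formLat (hπ : v π = 1) (hL0 : L0 v = span2 v u e)
    (hdet : v (det2 u e) = 0) {m : ℕ} (h : π ^ m • e ∈ formLat v π u.1 u.2 n) : n ≤ m := by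
  have hD : det2 u e ≠ 0 := fun h => by simp [h] at hdet
  rw [formLat_eq_span2 hπ hL0] at h
  obtain ⟨s, t, -, ht, hst⟩ := h
  have h1 : π ^ m * e.1 = s * u.1 + t * (π ^ n * e.1) := congrArg Prod.fst hst
  have h2 : π ^ m * e.2 = s * u.2 + t * (π ^ n * e.2) := congrArg Prod.snd hst
  -- the determinant with `u` eliminates `s`
  have hpow : π ^ m = t * π ^ n := by
    refine mul_right_cancel₀ hD ?_
    unfold det2
    linear_combination u.1 * h2 - u.2 * h1
  have : (m : WithTop ℤ) = v t + n := by
    rw [← map_pow_uniformizer hπ, hpow, v.map_mul, map_pow_uniformizer hπ]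
  have : (n : WithTop ℤ) ≤ m := this ▸ le_add_of_nonneg_left ht
  exact_mod_cast this

lemma mem_valRing_of_smul_mem_L0 (hunit : v u.1 = 0 ∨ v u.2 = 0) {c : K} (h : c • u ∈ L0 v) :
    c ∈ valRing v := by
  rw [mem_L0_iff] at h
  rcases hunit with h1 | h2
  · exact mem_valRing_of_map_eq_zero_of_mul_mem h1 h.1
  · exact mem_valRing_of_map_eq_zero_of_mul_mem h2 h.2

end Uniformizer

section Homothety

variable {v : AddValuation K (WithTop ℤ)} {π : K} {a b a' b' : K} {n m : ℕ}

lemma image_smul_formLat_subset {c : K} (hab : v a = 0 ∨ v b = 0)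
    (hc : (fun p : K × K => c • p) '' formLat v π a b n ⊆ L0 v) :
    (fun p : K × K => c • p) '' formLat v π a b n ⊆ formLat v π a b n := by
  have hcO : c ∈ valRing v := mem_valRing_of_smul_mem_L0 hab (hc ⟨_, mem_formLat_self, rfl⟩)
  rintro _ ⟨p, hp, rfl⟩
  exact smul_mem_formLat hcO hp

lemma formLat_eq_of_homothetic (hπ : v π = 1) (ha : a ∈ valRing v) (hb : b ∈ valRing v)
    (hab : v a = 0 ∨ v b = 0) (ha' : a' ∈ valRing v) (hb' : b' ∈ valRing v)
    (hab' : v a' = 0 ∨ v b' = 0) (h : Homothetic (formLat v π a b n) (formLat v π a' b' m)) :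
    formLat v π a' b' m = formLat v π a b n := by
  obtain ⟨c, hc0, hc⟩ := h
  have hcO : c ∈ valRing v := by
    refine mem_valRing_of_smul_mem_L0 (u := (a, b)) hab (formLat_subset_L0 (n := m) hπ ha' hb' ?_)
    exact hc ▸ ⟨_, mem_formLat_self, rfl⟩
  have hcinvO : c⁻¹ ∈ valRing v := by
    obtain ⟨p, hp, hpc⟩ : ((a', b') : K × K) ∈ _ := hc ▸ mem_formLat_self
    refine mem_valRing_of_smul_mem_L0 (u := (a', b')) hab' (formLat_subset_L0 (n := n) hπ ha hb ?_)
    rwa [← hpc, smul_smul, inv_mul_cancel₀ hc0, one_smul]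
  rw [← hc]
  refine subset_antisymm ?_ fun p hp => ⟨c⁻¹ • p, smul_mem_formLat hcinvO hp, ?_⟩
  · rintro _ ⟨p, hp, rfl⟩
    exact smul_mem_formLat hcO hp
  · simp only [smul_smul, mul_inv_cancel₀ hc0, one_smul]

end Homothety

section Maximal

variable {v : AddValuation K (WithTop ℤ)} {π : K} {L : Set (K × K)} {u e : K × K} {n : ℕ}

lemma mem_of_pow_smul_mem {M : Type*} [AddCommGroup M] [Module K M] {S : Set M} (hπ0 : π ≠ 0)
    (hS : ∀ p ∈ S, π⁻¹ • p ∈ S) (k : ℕ) {p : M} (hp : π ^ k • p ∈ S) : p ∈ S := by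
  induction k generalizing p with
  | zero => simpa using hp
  | succ k ih =>
    have := hS _ (ih (p := π • p) (by rwa [smul_smul, ← pow_succ]))
    rwa [smul_smul, inv_mul_cancel₀ hπ0, one_smul] at this

lemma inv_smul_mem_L0 (hπ : v π = 1) {p : K × K} (hp : p ∈ L0 v) (h1 : v p.1 ≠ 0)
    (h2 : v p.2 ≠ 0) : π⁻¹ • p ∈ L0 v := by
  have hπ0 := uniformizer_ne_zero hπ
  rw [mem_L0_iff] at hp ⊢
  simp only [Prod.smul_fst, Prod.smul_snd, smul_eq_mul, inv_mul_eq_div]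
  exact ⟨div_mem_valRing hπ0 (hπ ▸ WithTop.one_le_of_nonneg_of_ne_zero hp.1 h1),
    div_mem_valRing hπ0 (hπ ▸ WithTop.one_le_of_nonneg_of_ne_zero hp.2 h2)⟩

lemma exists_mem_unit_coord (hπ : v π = 1) (hsub : L ⊆ L0 v)
    (hmax : ∀ c : K, c ≠ 0 → (fun p : K × K => c • p) '' L ⊆ L0 v →
      (fun p : K × K => c • p) '' L ⊆ L)
    (hin : ∀ p ∈ L0 v, π ^ n • p ∈ L) (hnh : ¬ Homothetic L (L0 v)) :
    ∃ u ∈ L, v u.1 = 0 ∨ v u.2 = 0 := by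
  by_contra! hL
  have hπ0 := uniformizer_ne_zero hπ
  have hdown : ∀ p ∈ L, π⁻¹ • p ∈ L := by
    refine fun p hp => hmax π⁻¹ (inv_ne_zero hπ0) ?_ ⟨p, hp, rfl⟩
    rintro _ ⟨q, hq, rfl⟩
    exact inv_smul_mem_L0 hπ (hsub hq) (hL q hq).1 (hL q hq).2
  have hL0 : L0 v ⊆ L := fun p hp => mem_of_pow_smul_mem hπ0 hdown n (hin p hp)
  exact hnh ⟨1, one_ne_zero, by simpa using hsub.antisymm hL0⟩

lemma pow_smul_mem_of_smul_mem (hπ : v π = 1) (hL : IsValRingSubmodule v L) (hu : u ∈ L)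
    (hL0 : L0 v = span2 v u e) {d : K} (hd0 : d ≠ 0) (hd : d • e ∈ L) {m : ℕ}
    (hdm : v d ≤ m) : ∀ r ∈ L0 v, π ^ m • r ∈ L := by
  intro r hr
  rw [hL0] at hr
  obtain ⟨s, t, hs, ht, rfl⟩ := hr
  have hcoef : π ^ m * t / d ∈ valRing v := by
    refine div_mem_valRing hd0 (hdm.trans ?_)
    rw [v.map_mul, map_pow_uniformizer hπ]
    exact le_add_of_nonneg_right ht
  convert hL u hu _ hd _ (mul_mem_valRing (pow_mem_valRing hπ m) hs) _ hcoef using 1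
  rw [smul_smul, div_mul_cancel₀ _ hd0]
  module

lemma eq_formLat_of_mem (hπ : v π = 1) (hL : IsValRingSubmodule v L) (hsub : L ⊆ L0 v)
    (hu : u ∈ L) (hL0 : L0 v = span2 v u e) (hin : ∀ p ∈ L0 v, π ^ n • p ∈ L)
    (hmin : ∀ m : ℕ, m < n → ¬ ∀ p ∈ L0 v, π ^ m • p ∈ L) :
    L = formLat v π u.1 u.2 n := by
  have hπ0 := uniformizer_ne_zero hπ
  refine subset_antisymm (fun p hp => ?_) ?_
  · have hp0 := hsub hp
    rw [hL0] at hp0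
    obtain ⟨c, d, hc, hd, rfl⟩ := hp0
    have hde : d • e ∈ L := by
      simpa using hL _ hp u hu 1 one_mem_valRing (-c) (by simpa [valRing] using hc)
    have hdn : (n : WithTop ℤ) ≤ v d := by
      by_contra! hlt
      obtain ⟨m, hmn, hm⟩ := WithTop.exists_nat_eq_of_nonneg_of_lt hd hlt
      have hd0 : d ≠ 0 := fun h => by simp [h] at hm
      exact hmin m hmn (pow_smul_mem_of_smul_mem hπ hL hu hL0 hd0 hde hm.le)
    have he : (d / π ^ n) • e ∈ L0 v := by
      refine isValRingSubmodule_L0.smul_mem (div_mem_valRing (pow_ne_zero n hπ0) ?_) ?_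
      · rwa [map_pow_uniformizer hπ]
      · exact hL0 ▸ right_mem_span2 u e
    refine ⟨c, hc, _, he, ?_⟩
    rw [smul_smul, mul_div_cancel₀ _ (pow_ne_zero n hπ0)]
  · rintro _ ⟨s, hs, q, hq, rfl⟩
    simpa using hL u hu _ (hin q hq) s hs 1 one_mem_valRing

end Maximal

theorem statement19_general (v : K → WithTop ℤ)
    (hv0 : ∀ a : K, v a = ⊤ ↔ a = 0)
    (hvmul : ∀ a b : K, v (a * b) = v a + v b)
    (hvadd : ∀ a b : K, min (v a) (v b) ≤ v (a + b))
    (π : K) (hπ : v π = 1) :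
    (∀ (L : Set (K × K)) (n : ℕ), IsLattice v L → ¬ Homothetic L (L0 v) →
      L ⊆ L0 v →
      (∀ c : K, c ≠ 0 → (fun p : K × K => c • p) '' L ⊆ L0 v →
        (fun p : K × K => c • p) '' L ⊆ L) →
      (∀ p ∈ L0 v, (π ^ n) • p ∈ L) →
      (∀ m : ℕ, m < n → ¬ ∀ p ∈ L0 v, (π ^ m) • p ∈ L) →
      ∃ a b : K, a ∈ valRing v ∧ b ∈ valRing v ∧ (v a = 0 ∨ v b = 0) ∧
        L = formLat v π a b n) ∧
    (∀ (a b : K) (n : ℕ), a ∈ valRing v → b ∈ valRing v → (v a = 0 ∨ v b = 0) →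
      ¬ Homothetic (formLat v π a b n) (L0 v) →
      IsLattice v (formLat v π a b n) ∧
      formLat v π a b n ⊆ L0 v ∧
      (∀ c : K, c ≠ 0 → (fun p : K × K => c • p) '' (formLat v π a b n) ⊆ L0 v →
        (fun p : K × K => c • p) '' (formLat v π a b n) ⊆ formLat v π a b n) ∧
      (∀ p ∈ L0 v, (π ^ n) • p ∈ formLat v π a b n) ∧
      (∀ m : ℕ, m < n → ¬ ∀ p ∈ L0 v, (π ^ m) • p ∈ formLat v π a b n) ∧
      (∀ (a' b' : K) (m : ℕ), a' ∈ valRing v → b' ∈ valRing v →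
        (v a' = 0 ∨ v b' = 0) →
        Homothetic (formLat v π a b n) (formLat v π a' b' m) →
        formLat v π a' b' m = formLat v π a b n)) := by
  obtain ⟨w, rfl⟩ : ∃ w : AddValuation K (WithTop ℤ), ⇑w = v :=
    ⟨.of v ((hv0 0).2 rfl) (map_one_eq_zero_of_map_mul hv0 hvmul) hvadd hvmul, rfl⟩
  refine ⟨fun L n hL hnh hsub hmax hin hmin => ?_, fun a b n ha hb hab _ => ?_⟩
  · obtain ⟨u, hu, hunit⟩ := exists_mem_unit_coord hπ hsub hmax hin hnh
    obtain ⟨e, hL0, -⟩ := exists_L0_eq_span2 (hsub hu) hunit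
    obtain ⟨x, y, -, rfl⟩ := hL
    obtain ⟨hu1, hu2⟩ := (mem_L0_iff _ u).1 (hsub hu)
    exact ⟨u.1, u.2, hu1, hu2, hunit,
      eq_formLat_of_mem hπ (isValRingSubmodule_span2 x y) hsub hu hL0 hin hmin⟩
  · obtain ⟨e, hL0, hdet⟩ :=
      exists_L0_eq_span2 (u := (a, b)) ((mem_L0_iff _ _).2 ⟨ha, hb⟩) hab
    have he : e ∈ L0 w := hL0 ▸ right_mem_span2 _ e
    exact ⟨isLattice_formLat hπ hL0 hdet n, formLat_subset_L0 hπ ha hb,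
      fun c _ hc => image_smul_formLat_subset hab hc, fun p hp => pow_smul_mem_formLat hp,
      fun m hm hall => hm.not_ge (le_of_pow_smul_mem_formLat hπ hL0 hdet (hall e he)),
      fun a' b' m ha' hb' hab' h => formLat_eq_of_homothetic hπ ha hb hab ha' hb' hab' h⟩

/-- let `O` be the valuation ring of a field `K` with a discrete
valuation `v` and uniformizer `π`, and `L₀` the standard lattice in `K²`.
(1) If `L` is a lattice not homothetic to `L₀`, maximal in its homothety class among
lattices contained in `L₀`, and `n = d([L₀],[L])` (i.e. `n` is minimal with
`πⁿ L₀ ⊆ L`), then `L = (a e₁ + b e₂) O + πⁿ L₀` for some `a, b ∈ O` with at least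
one of `a, b` invertible in `O` (i.e. of valuation `0`).
(2) Conversely, any set of this form (with at least one of `a, b` of valuation `0`)
which is not homothetic to `L₀` is a lattice at distance `n` from `L₀` (it is
contained in `L₀`, maximal in its class there, and `n` is minimal with
`πⁿ L₀ ⊆ L`), and it is the unique lattice in its homothety class expressible in
this way. -/
theorem statement19 (v : K → WithTop ℤ)
    (hv0 : ∀ a : K, v a = ⊤ ↔ a = 0)
    (hvmul : ∀ a b : K, v (a * b) = v a + v b)
    (hvadd : ∀ a b : K, min (v a) (v b) ≤ v (a + b))
    (hvsurj : Function.Surjective v)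
    (π : K) (hπ : v π = 1) :
    (∀ (L : Set (K × K)) (n : ℕ), IsLattice v L → ¬ Homothetic L (L0 v) →
      L ⊆ L0 v →
      (∀ c : K, c ≠ 0 → (fun p : K × K => c • p) '' L ⊆ L0 v →
        (fun p : K × K => c • p) '' L ⊆ L) →
      (∀ p ∈ L0 v, (π ^ n) • p ∈ L) →
      (∀ m : ℕ, m < n → ¬ ∀ p ∈ L0 v, (π ^ m) • p ∈ L) →
      ∃ a b : K, a ∈ valRing v ∧ b ∈ valRing v ∧ (v a = 0 ∨ v b = 0) ∧
        L = formLat v π a b n) ∧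
    (∀ (a b : K) (n : ℕ), a ∈ valRing v → b ∈ valRing v → (v a = 0 ∨ v b = 0) →
      ¬ Homothetic (formLat v π a b n) (L0 v) →
      IsLattice v (formLat v π a b n) ∧
      formLat v π a b n ⊆ L0 v ∧
      (∀ c : K, c ≠ 0 → (fun p : K × K => c • p) '' (formLat v π a b n) ⊆ L0 v →
        (fun p : K × K => c • p) '' (formLat v π a b n) ⊆ formLat v π a b n) ∧
      (∀ p ∈ L0 v, (π ^ n) • p ∈ formLat v π a b n) ∧
      (∀ m : ℕ, m < n → ¬ ∀ p ∈ L0 v, (π ^ m) • p ∈ formLat v π a b n) ∧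
      (∀ (a' b' : K) (m : ℕ), a' ∈ valRing v → b' ∈ valRing v →
        (v a' = 0 ∨ v b' = 0) →
        Homothetic (formLat v π a b n) (formLat v π a' b' m) →
        formLat v π a' b' m = formLat v π a b n)) :=
  statement19_general v hv0 hvmul hvadd π hπ
end
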